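/- arXiv:1206.4001 — 8 statements merged into one kernel-verified Lean document; each statement's English description precedes it below -/
import Mathlib

section
/- Let N be a positive integer and suppose the edges of the complete 3-uniform hypergraph on vertex set {1,...,N} are 2-colored with no monochromatic monotone path of length n. Then N ≤ C(2n, n). Consequently, N_3(2,n) ≤ C(2n,n) + 1. -/
/-- The coloring `c` of the triples of `{0,…,N-1}` admits a monochromatic monotone
path of length `n`: vertices `x_0 < x_1 < ⋯ < x_{n+1}` all of whose `n` consecutive
triples receive the same color. -/
def HasMonoPath3 {N q : ℕ} (n : ℕ) (c : Fin N → Fin N → Fin N → Fin q) : Prop :=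
  ∃ x : Fin (n + 2) → Fin N, StrictMono x ∧ ∃ col : Fin q,
    ∀ i : ℕ, ∀ _ : i < n,
      c (x ⟨i, by omega⟩) (x ⟨i + 1, by omega⟩) (x ⟨i + 2, by omega⟩) = col

/-!
Record, for each pair `i < j`, the lengths `(a, b)` of the longest color-`0` and color-`1`
monotone paths ending with `i, j`; without monochromatic paths of length `n` both are `< n`.
For each vertex `j`, the pairs recorded at `(i, j)`, `i < j`, generate a down-set of the grid
`[0, n)²`, and distinct vertices give distinct down-sets: for `j < k` the pair recorded at
`(j, k)` lies in the down-set of `k`, but not in that of `j`, since the edge `i j k` would extend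
one of the two paths ending at `i, j`. A down-set of `[0, n)²` is a lattice path with `n`
horizontal and `n` vertical steps, so there are at most `C(2n, n)` vertices.
-/

open Finset

/-- A staircase `g` is encoded by the `n`-subset `{a + (m - g a)}` of `[0, n + m)`. -/
theorem Fintype.card_le_choose_of_injective_antitone {ι : Type*} [Fintype ι] {n m : ℕ}
    (g : ι → Fin n → ℕ) (hg : Function.Injective g) (hanti : ∀ i, Antitone (g i))
    (hle : ∀ i a, g i a ≤ m) : Fintype.card ι ≤ (n + m).choose n := by
  set code : ι → Fin n → ℕ := fun i a => a + (m - g i a)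
  have hmono (i : ι) : StrictMono (code i) := fun a b hab => by
    have : g i b ≤ g i a := hanti i hab.le
    have : g i a ≤ m := hle i a
    have : (a : ℕ) < b := hab
    simp only [code]
    omega
  have hmaps (i : ι) : univ.image (code i) ∈ powersetCard n (range (n + m)) := by
    refine mem_powersetCard.2 ⟨fun x hx => ?_, ?_⟩
    · obtain ⟨a, -, rfl⟩ := mem_image.1 hx
      have := a.isLt
      simp only [code, mem_range]
      omega
    · rw [card_image_of_injective _ (hmono i).injective, card_univ, Fintype.card_fin]
  have hinj : Function.Injective fun i => univ.image (code i) := fun i i' h => by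
    have hrange : Set.range (code i) = Set.range (code i') := by
      simpa only [coe_image, coe_univ, Set.image_univ] using
        congrArg ((↑) : Finset ℕ → Set ℕ) h
    have hcode := (hmono i).range_inj (hmono i') |>.1 hrange
    refine hg (funext fun a => ?_)
    have := congrFun hcode a
    have := hle i a
    have := hle i' a
    simp only [code] at *
    omega
  simpa only [card_univ, card_powersetCard, Finset.card_range] using
    card_le_card_of_injOn (s := univ) _ (fun i _ => hmaps i) hinj.injOn

section Paths

variable {N q : ℕ} (c : Fin N → Fin N → Fin N → Fin q)

/-- Paths are indexed by `ℕ`; only `x 0 < ⋯ < x (m + 1)` matter. -/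
def IsMonoPathEnd (col : Fin q) (m : ℕ) (i j : Fin N) : Prop :=
  ∃ x : ℕ → Fin N, (∀ t ≤ m, x t < x (t + 1)) ∧ x m = i ∧ x (m + 1) = j ∧
    ∀ t < m, c (x t) (x (t + 1)) (x (t + 2)) = col

variable {c}

theorem isMonoPathEnd_zero (col : Fin q) {i j : Fin N} (hij : i < j) :
    IsMonoPathEnd c col 0 i j :=
  ⟨fun t => if t = 0 then i else j, by simpa using hij, rfl, rfl, by simp⟩

theorem IsMonoPathEnd.snoc {col : Fin q} {m : ℕ} {i j k : Fin N} (h : IsMonoPathEnd c col m i j)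
    (hjk : j < k) (hc : c i j k = col) : IsMonoPathEnd c col (m + 1) j k := by
  obtain ⟨x, hlt, hi, hj, hcol⟩ := h
  refine ⟨fun t => if t ≤ m + 1 then x t else k, fun t ht => ?_, by simp [hj], by simp, ?_⟩
  · rcases Nat.lt_or_eq_of_le ht with ht | rfl
    · simpa [show t ≤ m + 1 by omega, show t + 1 ≤ m + 1 by omega] using hlt t (by omega)
    · simpa [hj] using hjk
  · intro t ht
    rcases Nat.lt_or_eq_of_le (Nat.le_of_lt_succ ht) with ht | rfl
    · simpa [show t ≤ m + 1 by omega, show t + 1 ≤ m + 1 by omega,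
        show t + 2 ≤ m + 1 by omega] using hcol t ht
    · simpa [hi, hj] using hc

theorem IsMonoPathEnd.hasMonoPath3 {n : ℕ} {col : Fin q} {m : ℕ} {i j : Fin N}
    (h : IsMonoPathEnd c col m i j) (hnm : n ≤ m) : HasMonoPath3 n c := by
  obtain ⟨x, hlt, -, -, hcol⟩ := h
  refine ⟨fun t => x t, Fin.strictMono_iff_lt_succ.2 fun t => ?_, col,
    fun t ht => hcol t (by omega)⟩
  simpa using hlt t (by omega)

variable (c) in
open Classical in
/-- Capped at `n`, which loses nothing when there is no monochromatic path of length `n`. -/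
noncomputable def maxPathLength (n : ℕ) (col : Fin q) (i j : Fin N) : ℕ :=
  Nat.findGreatest (IsMonoPathEnd c col · i j) n

variable {n : ℕ} {col : Fin q} {i j k : Fin N}

open Classical in
theorem isMonoPathEnd_maxPathLength (hij : i < j) :
    IsMonoPathEnd c col (maxPathLength c n col i j) i j :=
  Nat.findGreatest_spec (P := (IsMonoPathEnd c col · i j)) (Nat.zero_le n)
    (isMonoPathEnd_zero col hij)

theorem maxPathLength_lt (hno : ¬ HasMonoPath3 n c) (hij : i < j) :
    maxPathLength c n col i j < n :=
  not_le.1 fun hle => hno ((isMonoPathEnd_maxPathLength hij).hasMonoPath3 hle)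

open Classical in
theorem maxPathLength_lt_maxPathLength (hno : ¬ HasMonoPath3 n c) (hij : i < j) (hjk : j < k)
    (hc : c i j k = col) : maxPathLength c n col i j < maxPathLength c n col j k :=
  Nat.le_findGreatest (maxPathLength_lt hno hij) ((isMonoPathEnd_maxPathLength hij).snoc hjk hc)

end Paths

section Staircase

variable {N : ℕ} (c : Fin N → Fin N → Fin N → Fin 2)

noncomputable def staircase (n : ℕ) (j : Fin N) (a : Fin n) : ℕ :=
  {i ∈ (univ : Finset (Fin N)) | i < j ∧ (a : ℕ) ≤ maxPathLength c n 0 i j}.sup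
    (maxPathLength c n 1 · j + 1)

variable {c} {n : ℕ}

theorem lt_staircase_iff {j : Fin N} {a : Fin n} {b : ℕ} :
    b < staircase c n j a ↔
      ∃ i < j, (a : ℕ) ≤ maxPathLength c n 0 i j ∧ b ≤ maxPathLength c n 1 i j := by
  simp [staircase, Finset.lt_sup_iff, and_assoc]

theorem staircase_antitone (j : Fin N) : Antitone (staircase c n j) := fun _ _ haa' =>
  Finset.sup_mono <| monotone_filter_right _ fun _ _ => And.imp_right (le_trans haa')

theorem staircase_le (hno : ¬ HasMonoPath3 n c) (j : Fin N) (a : Fin n) :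
    staircase c n j a ≤ n :=
  Finset.sup_le fun _ hi => maxPathLength_lt hno (mem_filter.1 hi).2.1

theorem staircase_injective (hno : ¬ HasMonoPath3 n c) : Function.Injective (staircase c n) := by
  refine Function.Injective.of_lt_imp_ne fun j k hjk heq => ?_
  have ha := maxPathLength_lt (col := 0) hno hjk
  have hk : maxPathLength c n 1 j k < staircase c n k ⟨_, ha⟩ :=
    lt_staircase_iff.2 ⟨j, hjk, le_rfl, le_rfl⟩
  obtain ⟨i, hij, h0, h1⟩ := lt_staircase_iff.1 (heq ▸ hk)
  have hlonger : ∀ col, c i j k = col → maxPathLength c n col i j < maxPathLength c n col j k :=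
    fun col => maxPathLength_lt_maxPathLength hno hij hjk
  rcases Fin.exists_fin_two.1 ⟨c i j k, rfl⟩ with h | h
  · exact (hlonger 0 h).not_ge h0
  · exact (hlonger 1 h).not_ge h1

theorem card_le_choose_of_not_hasMonoPath3 (hno : ¬ HasMonoPath3 n c) :
    N ≤ (2 * n).choose n := by
  simpa [two_mul] using Fintype.card_le_choose_of_injective_antitone _ (staircase_injective hno)
    staircase_antitone (staircase_le hno)

end Staircase

/-- If the triples of `{1,…,N}` (`N ≥ 1`) are `2`-colored with no monochromatic monotone
path of length `n`, then `N ≤ C(2n,n)`; consequently `N_3(2,n) ≤ C(2n,n) + 1`. -/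
theorem stmt4 (n : ℕ) :
    (∀ N : ℕ, 1 ≤ N → ∀ c : Fin N → Fin N → Fin N → Fin 2,
        ¬ HasMonoPath3 n c → N ≤ Nat.choose (2 * n) n) ∧
    sInf {N : ℕ | ∀ c : Fin N → Fin N → Fin N → Fin 2, HasMonoPath3 n c}
      ≤ Nat.choose (2 * n) n + 1 :=
  ⟨fun _ _ _ => card_le_choose_of_not_hasMonoPath3,
    Nat.sInf_le fun _ => not_not.1 fun hno =>
      (card_le_choose_of_not_hasMonoPath3 hno).not_gt (Nat.lt_succ_self _)⟩
end

section
/- Let q ≥ 2, n ≥ 2, and let P_{q-1}(n) denote the number of down-sets of the poset [n]^q with the coordinatewise order. If the edges of the complete 3-uniform hypergraph on vertex set {1,...,N} are q-colored with no monochromatic monotone path of length n, then N ≤ P_{q-1}(n). That is, N_3(q,n) ≤ P_{q-1}(n) + 1. -/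
/-- `S ⊆ [n]^q` is a down-set (w.r.t. the coordinatewise order). -/
def IsDownSet {d n : ℕ} (S : Set (Fin d → Fin n)) : Prop :=
  ∀ ⦃x y : Fin d → Fin n⦄, x ≤ y → y ∈ S → x ∈ S

/-- `P_{q-1}(n)`: the number of down-sets of `[n]^q`. -/
noncomputable def Pnum (q n : ℕ) : ℕ := Nat.card {S : Set (Fin q → Fin n) // IsDownSet S}

/-!
For a pair `a < b` and a colour `k`, let `longest c k a b` be the length of a longest
monotone path of colour `k` whose last two vertices are `a, b`; without a monochromatic path of
length `n` all these numbers lie in `{0, …, n - 1}`. If `x < a < b` and `k = c x a b`, then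
appending `b` to a longest path ending in `x, a` shows `longest c k x a < longest c k a b`.
Hence the down-set of `[n]^q` generated by the vectors `(longest c k a v)_k`, `a < v`, contains
the vector of `(a, b)` when `v = b` but not when `v = a`, so distinct vertices give distinct
down-sets.
-/

namespace MonotonePath

variable {N q : ℕ} (c : Fin N → Fin N → Fin N → Fin q) (k : Fin q)

def IsPath (m : ℕ) (x : Fin (m + 2) → Fin N) : Prop :=
  StrictMono x ∧ ∀ i : ℕ, ∀ _ : i < m,
    c (x ⟨i, by omega⟩) (x ⟨i + 1, by omega⟩) (x ⟨i + 2, by omega⟩) = k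

def EndsAt (a b : Fin N) (m : ℕ) : Prop :=
  ∃ x : Fin (m + 2) → Fin N,
    IsPath c k m x ∧ x ⟨m, by omega⟩ = a ∧ x ⟨m + 1, by omega⟩ = b

variable {c k}

theorem IsPath.restrict {m n : ℕ} {x : Fin (m + 2) → Fin N} (hx : IsPath c k m x)
    (hnm : n ≤ m) :
    IsPath c k n (x ∘ Fin.castLE (by omega)) :=
  ⟨hx.1.comp (Fin.strictMono_castLE _), fun i hi => hx.2 i (by omega)⟩

theorem endsAt_zero {a b : Fin N} (hab : a < b) : EndsAt c k a b 0 := by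
  refine ⟨![a, b], ⟨Fin.strictMono_iff_lt_succ.2 ?_, by simp⟩, rfl, rfl⟩
  intro i
  fin_cases i
  simpa using hab

theorem EndsAt.snoc {a b b' : Fin N} {m : ℕ} (h : EndsAt c k a b m) (hbb' : b < b')
    (hk : c a b b' = k) : EndsAt c k b b' (m + 1) := by
  obtain ⟨x, ⟨hmono, hcol⟩, rfl, rfl⟩ := h
  refine ⟨Fin.snoc x b', ⟨?_, fun i hi => ?_⟩, ?_, ?_⟩
  · rw [← Fin.insertNth_last']
    exact Fin.strictMono_insertNth_last hmono _ hbb'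
  · rcases Nat.lt_succ_iff_lt_or_eq.1 hi with hi | rfl
    · simpa [Fin.snoc, show i < m + 2 by omega, show i ≤ m by omega,
        show i + 2 < m + 2 by omega] using hcol i hi
    · simpa [Fin.snoc] using hk
  · simp [Fin.snoc]
  · simp [Fin.snoc]

theorem EndsAt.lt {n m : ℕ} {a b : Fin N} (hnp : ¬ HasMonoPath3 n c) (h : EndsAt c k a b m) :
    m < n := by
  by_contra! hnm
  obtain ⟨x, hx, -⟩ := h
  have := hx.restrict hnm
  exact hnp ⟨_, this.1, k, this.2⟩

variable (c k) in
noncomputable def longest (a b : Fin N) : ℕ := sSup {m | EndsAt c k a b m}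

section NoMonoPath

variable {n : ℕ} (hnp : ¬ HasMonoPath3 n c)
include hnp

theorem bddAbove_endsAt (a b : Fin N) : BddAbove {m | EndsAt c k a b m} :=
  ⟨n, fun _ hm => (EndsAt.lt hnp hm).le⟩

theorem endsAt_longest {a b : Fin N} (hab : a < b) : EndsAt c k a b (longest c k a b) :=
  Nat.sSup_mem ⟨0, endsAt_zero hab⟩ (bddAbove_endsAt hnp a b)

theorem longest_lt {a b : Fin N} (hab : a < b) : longest c k a b < n :=
  (endsAt_longest hnp hab).lt hnp

theorem longest_lt_longest {x a b : Fin N} (hxa : x < a) (hab : a < b) :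
    longest c (c x a b) x a < longest c (c x a b) a b :=
  le_csSup (bddAbove_endsAt hnp a b) ((endsAt_longest hnp hxa).snoc hab rfl)

end NoMonoPath

variable (c) in
def pathDownSet (n : ℕ) (v : Fin N) : Set (Fin q → Fin n) :=
  {z | ∃ a < v, ∀ k, (z k : ℕ) ≤ longest c k a v}

theorem isDownSet_pathDownSet (n : ℕ) (v : Fin N) : IsDownSet (pathDownSet c n v) :=
  fun _ _ hzy ⟨a, hav, hy⟩ => ⟨a, hav, fun k => (Fin.le_def.1 (hzy k)).trans (hy k)⟩

theorem pathDownSet_injective {n : ℕ} (hnp : ¬ HasMonoPath3 n c) :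
    Function.Injective (pathDownSet c n) := by
  have key : ∀ {a b : Fin N}, a < b → pathDownSet c n a ≠ pathDownSet c n b := by
    intro a b hab heq
    have hprofile : (fun k => ⟨longest c k a b, longest_lt hnp hab⟩) ∈ pathDownSet c n b :=
      ⟨a, hab, fun _ => le_rfl⟩
    obtain ⟨x, hxa, hle⟩ := heq ▸ hprofile
    exact (hle (c x a b)).not_gt (longest_lt_longest hnp hxa hab)
  intro a b h
  by_contra hne
  rcases lt_or_gt_of_ne hne with hab | hba
  · exact key hab h
  · exact key hba h.symm

theorem le_pnum_of_not_hasMonoPath3 {n : ℕ} (hnp : ¬ HasMonoPath3 n c) : N ≤ Pnum q n := by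
  simpa [Pnum] using Nat.card_le_card_of_injective
    (fun v => (⟨pathDownSet c n v, isDownSet_pathDownSet n v⟩ : {S // IsDownSet S}))
    (fun _ _ h => pathDownSet_injective hnp (congrArg Subtype.val h))

end MonotonePath

theorem stmt5_general (q n : ℕ) :
    (∀ N : ℕ, ∀ c : Fin N → Fin N → Fin N → Fin q,
        ¬ HasMonoPath3 n c → N ≤ Pnum q n) ∧
    sInf {N : ℕ | ∀ c : Fin N → Fin N → Fin N → Fin q, HasMonoPath3 n c}
      ≤ Pnum q n + 1 := by
  refine ⟨fun _ _ => MonotonePath.le_pnum_of_not_hasMonoPath3, Nat.sInf_le fun c => ?_⟩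
  by_contra hnp
  exact (MonotonePath.le_pnum_of_not_hasMonoPath3 hnp).not_gt (Nat.lt_succ_self _)

/-- If the triples of `{1,…,N}` are `q`-colored with no monochromatic monotone path of
length `n`, then `N ≤ P_{q-1}(n)`; that is, `N_3(q,n) ≤ P_{q-1}(n) + 1`. -/
theorem stmt5 (q n : ℕ) (hq : 2 ≤ q) (hn : 2 ≤ n) :
    (∀ N : ℕ, ∀ c : Fin N → Fin N → Fin N → Fin q,
        ¬ HasMonoPath3 n c → N ≤ Pnum q n) ∧
    sInf {N : ℕ | ∀ c : Fin N → Fin N → Fin N → Fin q, HasMonoPath3 n c}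
      ≤ Pnum q n + 1 :=
  stmt5_general q n
end

section
/- Let n ≥ 2 and N = C(2n,n). There exists a 2-coloring of the triples of a linearly ordered N-element set with no monochromatic monotone path of length n. That is, N_3(2,n) > C(2n,n). -/
open Finset

theorem Nat.add_le_of_forall_lt_succ {f : ℕ → ℕ} {m : ℕ} (h : ∀ i < m, f i < f (i + 1)) :
    f 0 + m ≤ f m := by
  induction m with
  | zero => rfl
  | succ m ih =>
    have := ih fun i hi => h i (by omega)
    have := h m (by omega)
    omega

section MonoPath

variable {α β κ : Type*}

-- Only `p 0, …, p (n + 1)` are constrained.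
def IsMonoPath [Preorder α] (c : α → α → α → κ) (n : ℕ) (p : ℕ → α) (col : κ) : Prop :=
  (∀ i ≤ n, p i < p (i + 1)) ∧ ∀ i < n, c (p i) (p (i + 1)) (p (i + 2)) = col

theorem hasMonoPath3_iff {N q n : ℕ} (c : Fin N → Fin N → Fin N → Fin q) :
    HasMonoPath3 n c ↔ ∃ p col, IsMonoPath c n p col := by
  constructor
  · rintro ⟨x, hx, col, hcol⟩
    have hp : ∀ i (h : i < n + 2), x (Fin.clamp i (n + 1)) = x ⟨i, h⟩ := fun i h =>
      congrArg x (Fin.ext (min_eq_left (by omega)))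
    refine ⟨fun i => x (Fin.clamp i (n + 1)), col, fun i hi => ?_, fun i hi => ?_⟩
    · dsimp only
      rw [hp i (by omega), hp (i + 1) (by omega)]
      exact hx (Fin.mk_lt_mk.2 (by omega))
    · dsimp only
      rw [hp i (by omega), hp (i + 1) (by omega), hp (i + 2) (by omega)]
      exact hcol i hi
  · rintro ⟨p, col, hlt, hcol⟩
    exact ⟨fun i => p i, Fin.strictMono_iff_lt_succ.2 fun i => hlt i (by omega), col, hcol⟩

theorem forall_hasMonoPath3_mono {n q N N' : ℕ} (hN : N ≤ N')
    (h : ∀ c : Fin N → Fin N → Fin N → Fin q, HasMonoPath3 n c)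
    (c : Fin N' → Fin N' → Fin N' → Fin q) : HasMonoPath3 n c := by
  obtain ⟨x, hx, col, hcol⟩ :=
    h fun a b d => c (Fin.castLE hN a) (Fin.castLE hN b) (Fin.castLE hN d)
  exact ⟨Fin.castLE hN ∘ x, (Fin.strictMono_castLE hN).comp hx, col, hcol⟩

namespace IsMonoPath

variable [Preorder α] {c : α → α → α → κ} {n L : ℕ} {p : ℕ → α} {col : κ}

theorem map [Preorder β] {c : β → β → β → κ} {f : α → β} (hf : StrictMono f)
    (h : IsMonoPath (fun x y z => c (f x) (f y) (f z)) n p col) : IsMonoPath c n (f ∘ p) col :=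
  ⟨fun i hi => hf (h.1 i hi), h.2⟩

theorem mono (h : IsMonoPath c L p col) (hn : n ≤ L) : IsMonoPath c n p col :=
  ⟨fun i hi => h.1 i (hi.trans hn), fun i hi => h.2 i (hi.trans_le hn)⟩

theorem lt_of_forall_not (hc : ∀ p col, ¬ IsMonoPath c n p col) (h : IsMonoPath c L p col) :
    L < n :=
  not_le.1 fun hn => hc p col (h.mono hn)

theorem pair {x y : α} (hxy : x < y) : IsMonoPath c 0 (fun i => if i = 0 then x else y) col :=
  ⟨fun i hi => by simpa [Nat.le_zero.1 hi] using hxy, fun i hi => absurd hi i.not_lt_zero⟩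

theorem snoc {z : α} (h : IsMonoPath c L p col) (hz : p (L + 1) < z)
    (hcol : c (p L) (p (L + 1)) z = col) :
    IsMonoPath c (L + 1) (fun i => if i ≤ L + 1 then p i else z) col := by
  refine ⟨fun i hi => ?_, fun i hi => ?_⟩
  · rcases hi.lt_or_eq with hi | rfl
    · simpa [Nat.lt_succ_iff.1 hi, show i ≤ L + 1 by omega] using h.1 i (by omega)
    · simpa using hz
  · rcases (Nat.lt_succ_iff.1 hi).lt_or_eq with hi | rfl
    · simpa [show i + 2 ≤ L + 1 by omega, show i + 1 ≤ L + 1 by omega, show i ≤ L + 1 by omega]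
        using h.2 i hi
    · simpa using hcol

end IsMonoPath

end MonoPath

section PathDepth

variable {α κ : Type*} [LinearOrder α] {c : α → α → α → κ} {n : ℕ}

-- The length of the longest path of colour `col` ending with `x, y`, searched up to `n`.
open Classical in
noncomputable def pathDepth (c : α → α → α → κ) (n : ℕ) (col : κ) (x y : α) : ℕ :=
  Nat.findGreatest (fun L => ∃ p, IsMonoPath c L p col ∧ p L = x ∧ p (L + 1) = y) n

theorem exists_isMonoPath_pathDepth {x y : α} (hxy : x < y) (col : κ) :
    ∃ p, IsMonoPath c (pathDepth c n col x y) p col ∧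
      p (pathDepth c n col x y) = x ∧ p (pathDepth c n col x y + 1) = y := by
  classical
  exact Nat.findGreatest_spec (P := fun L => ∃ p, IsMonoPath c L p col ∧ p L = x ∧ p (L + 1) = y)
    (Nat.zero_le n) ⟨_, IsMonoPath.pair hxy, rfl, rfl⟩

theorem pathDepth_lt (hc : ∀ p col, ¬ IsMonoPath c n p col) {x y : α} (hxy : x < y) (col : κ) :
    pathDepth c n col x y < n :=
  let ⟨_, hp, _⟩ := exists_isMonoPath_pathDepth hxy col
  hp.lt_of_forall_not hc

theorem pathDepth_lt_pathDepth (hc : ∀ p col, ¬ IsMonoPath c n p col) {x y z : α} (hxy : x < y)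
    (hyz : y < z) : pathDepth c n (c x y z) x y < pathDepth c n (c x y z) y z := by
  classical
  obtain ⟨p, hp, hx, hy⟩ := exists_isMonoPath_pathDepth (n := n) hxy (c x y z)
  have hext := hp.snoc (hy ▸ hyz) (by rw [hx, hy])
  exact Nat.le_findGreatest (hext.lt_of_forall_not hc).le ⟨_, hext, by simpa using hy, by simp⟩

theorem card_le_of_forall_not_isMonoPath [Fintype α] [Fintype κ]
    (hc : ∀ p col, ¬ IsMonoPath c n p col) : Fintype.card α ≤ 2 ^ n ^ Fintype.card κ := by
  classical
  let depths (x y : α) : κ → ℕ := fun col => pathDepth c n col x y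
  let outDepths (x : α) : Finset (κ → ℕ) := ({y | x < y} : Finset α).image (depths x)
  have hne {x y : α} (hxy : x < y) : outDepths x ≠ outDepths y := by
    intro h
    have hmem : depths x y ∈ outDepths y := h ▸ mem_image_of_mem (depths x) (by simpa using hxy)
    obtain ⟨z, hz, hzy⟩ := mem_image.1 hmem
    exact (pathDepth_lt_pathDepth hc hxy (by simpa using hz)).ne (congrFun hzy _).symm
  calc Fintype.card α = (univ : Finset α).card := rfl
    _ ≤ (Fintype.piFinset fun _ : κ => range n).powerset.card := by
      refine card_le_card_of_injOn outDepths (fun x _ => ?_) fun x _ y _ h => ?_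
      · simp only [coe_powerset, Set.mem_preimage, Set.mem_powerset_iff, coe_subset]
        intro d hd
        obtain ⟨y, hy, rfl⟩ := mem_image.1 hd
        simpa [depths] using fun col => pathDepth_lt hc (by simpa using hy) col
      · by_contra hxy
        rcases lt_or_gt_of_ne hxy with hxy | hxy
        exacts [hne hxy h, hne hxy h.symm]
    _ = 2 ^ n ^ Fintype.card κ := by simp [Fintype.card_piFinset]

end PathDepth

def LinePartition (k m : ℕ) : Type := {a : Lex (Fin k → Fin (m + 1)) // Antitone (ofLex a)}

namespace LinePartition

variable {k m : ℕ}

noncomputable instance : LinearOrder (LinePartition k m) := Subtype.instLinearOrder _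

instance : Fintype (LinePartition k m) := Subtype.fintype _

-- Padded with zeros, so that `entry` is antitone on all of `ℕ`.
def entry (A : LinePartition k m) (i : ℕ) : ℕ :=
  if h : i < k then ofLex A.1 ⟨i, h⟩ else 0

theorem entry_le (A : LinePartition k m) (i : ℕ) : A.entry i ≤ m := by
  unfold entry
  split_ifs
  exacts [Fin.is_le _, Nat.zero_le m]

theorem antitone_entry (A : LinePartition k m) : Antitone A.entry := by
  intro i j hij
  unfold entry
  split_ifs with hj hi hi
  · exact A.2 (Fin.mk_le_mk.2 hij)
  · omega
  · exact Nat.zero_le _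
  · exact le_rfl

noncomputable def firstDiff (A B : LinePartition k m) : ℕ := sInf {i | A.entry i ≠ B.entry i}

theorem exists_firstDiff_eq {A B : LinePartition k m} (h : A < B) :
    ∃ i : Fin k, A.firstDiff B = i ∧ ofLex A.1 i < ofLex B.1 i := by
  obtain ⟨i, hpre, hi⟩ := h
  have hmem : (i : ℕ) ∈ {j | A.entry j ≠ B.entry j} := by
    simpa [entry] using Fin.val_ne_of_ne hi.ne
  refine ⟨i, le_antisymm (Nat.sInf_le hmem) (le_csInf ⟨i, hmem⟩ fun j hj => ?_), hi⟩
  by_contra hji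
  have hjk : j < k := (not_le.1 hji).trans i.2
  exact hj (by simp [entry, hjk, hpre ⟨j, hjk⟩ (not_le.1 hji)])

theorem firstDiff_lt {A B : LinePartition k m} (h : A < B) : A.firstDiff B < k := by
  obtain ⟨i, hi, -⟩ := exists_firstDiff_eq h
  exact hi ▸ i.2

theorem entry_firstDiff_lt {A B : LinePartition k m} (h : A < B) :
    A.entry (A.firstDiff B) < B.entry (A.firstDiff B) := by
  obtain ⟨i, hi, hlt⟩ := exists_firstDiff_eq h
  simpa [hi, entry] using hlt

-- Colour `0` is the paper's black.
noncomputable def color (A B C : LinePartition k m) : Fin 2 :=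
  if A.firstDiff B < B.firstDiff C then 0 else 1

theorem lt_of_isMonoPath_zero {L : ℕ} {p : ℕ → LinePartition k m} (h : IsMonoPath color L p 0) :
    L < k := by
  let d (i : ℕ) := (p i).firstDiff (p (i + 1))
  have hd : ∀ i < L, d i < d (i + 1) := fun i hi => by simpa [color] using h.2 i hi
  have hL : d L < k := firstDiff_lt (h.1 L le_rfl)
  have := Nat.add_le_of_forall_lt_succ hd
  omega

theorem lt_of_isMonoPath_one {L : ℕ} {p : ℕ → LinePartition k m} (h : IsMonoPath color L p 1) :
    L < m := by
  let d (i : ℕ) := (p i).firstDiff (p (i + 1))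
  have hd : ∀ i < L, d (i + 1) ≤ d i := fun i hi => by simpa [color] using h.2 i hi
  -- The entry of the middle vertex at the first-difference index strictly increases.
  let w (i : ℕ) := (p (i + 1)).entry (d i)
  have hw : ∀ i < L, w i < w (i + 1) := fun i hi =>
    calc w i ≤ (p (i + 1)).entry (d (i + 1)) := (p (i + 1)).antitone_entry (hd i hi)
      _ < w (i + 1) := entry_firstDiff_lt (h.1 (i + 1) hi)
  have h0 : 0 < w 0 := (Nat.zero_le _).trans_lt (entry_firstDiff_lt (h.1 0 (Nat.zero_le L)))
  have hL : w L ≤ m := (p (L + 1)).entry_le (d L)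
  have := Nat.add_le_of_forall_lt_succ hw
  omega

def ofSym (s : Sym (Fin (m + 1)) k) : LinePartition k m :=
  ⟨toLex fun i => (s.1.sort (· ≥ ·)).get (i.cast (by simp)),
    fun _ _ hij => (List.sortedGE_iff_pairwise.2 (s.1.pairwise_sort _)).antitone_get hij⟩

theorem ofSym_injective : Function.Injective (ofSym (k := k) (m := m)) := by
  intro s t h
  have hfun := congrArg (fun A : LinePartition k m => ofLex A.1) h
  apply Sym.coe_injective
  change s.1 = t.1
  rw [← s.1.sort_eq (· ≥ ·), ← t.1.sort_eq (· ≥ ·)]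
  congr 1
  refine List.ext_get (by simp) fun i hs ht => ?_
  exact congrFun hfun ⟨i, by simpa using hs⟩

theorem choose_le_card : (k + m).choose k ≤ Fintype.card (LinePartition k m) := by
  have := Fintype.card_le_of_injective _ (ofSym_injective (k := k) (m := m))
  rwa [Sym.card_sym_eq_choose, Fintype.card_fin, show m + 1 + k - 1 = k + m by omega] at this

end LinePartition

theorem exists_coloring_not_hasMonoPath3 (n : ℕ) :
    ∃ c : Fin ((2 * n).choose n) → Fin ((2 * n).choose n) → Fin ((2 * n).choose n) → Fin 2,
      ¬ HasMonoPath3 n c := by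
  have hcard : (2 * n).choose n ≤ (univ : Finset (LinePartition n n)).card := by
    rw [two_mul, card_univ]
    exact LinePartition.choose_le_card
  let e := (univ : Finset (LinePartition n n)).orderEmbOfCardLe hcard
  refine ⟨fun x y z => LinePartition.color (e x) (e y) (e z), ?_⟩
  rw [hasMonoPath3_iff]
  rintro ⟨p, col, hp⟩
  replace hp := hp.map e.strictMono
  fin_cases col
  · exact (LinePartition.lt_of_isMonoPath_zero hp).false
  · exact (LinePartition.lt_of_isMonoPath_one hp).false

theorem stmt6_general (n : ℕ) :
    (∃ c : Fin (Nat.choose (2 * n) n) → Fin (Nat.choose (2 * n) n) →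
        Fin (Nat.choose (2 * n) n) → Fin 2, ¬ HasMonoPath3 n c) ∧
    Nat.choose (2 * n) n
      < sInf {N : ℕ | ∀ c : Fin N → Fin N → Fin N → Fin 2, HasMonoPath3 n c} := by
  obtain ⟨c, hc⟩ := exists_coloring_not_hasMonoPath3 n
  refine ⟨⟨c, hc⟩, ?_⟩
  have hfinite :
      2 ^ n ^ 2 + 1 ∈ {N : ℕ | ∀ c : Fin N → Fin N → Fin N → Fin 2, HasMonoPath3 n c} := by
    intro c'
    by_contra h
    simp only [hasMonoPath3_iff, not_exists] at h
    simpa using card_le_of_forall_not_isMonoPath h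
  by_contra hle
  exact hc (forall_hasMonoPath3_mono (not_lt.1 hle) (Nat.sInf_mem ⟨_, hfinite⟩) c)

/-- For `n ≥ 2` there exists a 2-coloring of the triples of a linearly ordered set of
size `C(2n,n)` with no monochromatic monotone path of length `n`; that is,
`N_3(2,n) > C(2n,n)`. -/
theorem stmt6 (n : ℕ) (hn : 2 ≤ n) :
    (∃ c : Fin (Nat.choose (2 * n) n) → Fin (Nat.choose (2 * n) n) →
        Fin (Nat.choose (2 * n) n) → Fin 2, ¬ HasMonoPath3 n c) ∧
    Nat.choose (2 * n) n
      < sInf {N : ℕ | ∀ c : Fin N → Fin N → Fin N → Fin 2, HasMonoPath3 n c} :=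
  stmt6_general n
end

section
/- For all d ≥ 2 and k with d ≤ k ≤ dn, let S_n(k,d) be the number of d-tuples (x_1,...,x_d) ∈ [n]^d with x_1 + ... + x_d = k. Then max_k S_n(k,d) ≥ (2/3) · n^{d-1} / √d. -/
/-!
The coordinate sum `S(x) = x₁ + ⋯ + x_d` on `[n]^d` has mean `μ = d(n+1)/2` and variance
`σ² = d(n²-1)/12`. By Chebyshev, at most a fraction `4σ²/m²` of the points satisfy
`|S - μ| ≥ m/2`; the remaining points take at most `m` values of `S`, so some level set has at
least `n^d (1 - 4σ²/m²)/m` points. The optimum of this bound is at `m² = 12σ² < d n²`, and taking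
for `m` the integer nearest to `n√d` already gives `2 n^(d-1) / (3√d)`.
-/

open Finset

theorem sum_fin_val_cast (n : ℕ) : ∑ a : Fin n, (a : ℝ) = n * (n - 1) / 2 := by
  induction n with
  | zero => simp
  | succ n ih =>
    rw [Fin.sum_univ_castSucc]
    simp only [Fin.val_castSucc, Fin.val_last, ih]
    push_cast
    ring

theorem sum_fin_val_cast_sq (n : ℕ) :
    ∑ a : Fin n, (a : ℝ) ^ 2 = n * (n - 1) * (2 * n - 1) / 6 := by
  induction n with
  | zero => simp
  | succ n ih =>
    rw [Fin.sum_univ_castSucc]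
    simp only [Fin.val_castSucc, Fin.val_last, ih]
    push_cast
    ring

theorem sum_fin_val_sub_mean (n : ℕ) : ∑ a : Fin n, ((a : ℝ) - (n - 1) / 2) = 0 := by
  simp only [sum_sub_distrib, sum_fin_val_cast, sum_const, card_univ, Fintype.card_fin,
    nsmul_eq_mul]
  ring

theorem sum_fin_val_sub_mean_sq (n : ℕ) :
    ∑ a : Fin n, ((a : ℝ) - (n - 1) / 2) ^ 2 = n * ((n : ℝ) ^ 2 - 1) / 12 := by
  simp only [sub_sq, sum_add_distrib, sum_sub_distrib, ← sum_mul, ← mul_sum, sum_fin_val_cast,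
    sum_fin_val_cast_sq, sum_const, card_univ, Fintype.card_fin, nsmul_eq_mul]
  ring

theorem sum_sq_sum_comp_of_sum_eq_zero {β : Type*} [Fintype β] (g : β → ℝ)
    (hg : ∑ b, g b = 0) (d : ℕ) :
    ∑ x : Fin d → β, (∑ i, g (x i)) ^ 2 = d * Fintype.card β ^ (d - 1) * ∑ b, g b ^ 2 := by
  induction d with
  | zero => simp
  | succ d ih =>
    rw [← (Fin.consEquiv fun _ => β).sum_comp, Fintype.sum_prod_type]
    simp only [Fin.consEquiv_apply, Fin.sum_univ_succ, Fin.cons_zero, Fin.cons_succ, add_sq,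
      sum_add_distrib, ← sum_mul, ← mul_sum, sum_const, card_univ, ih, hg, Fintype.card_fun,
      Fintype.card_fin, nsmul_eq_mul]
    rcases d with _ | d
    · simp
    · push_cast
      ring

theorem card_filter_le_abs_mul_sq_le_sum_sq {α : Type*} (s : Finset α) (g : α → ℝ) {a : ℝ}
    (ha : 0 ≤ a) : #{x ∈ s | a ≤ |g x|} * a ^ 2 ≤ ∑ x ∈ s, g x ^ 2 :=
  calc #{x ∈ s | a ≤ |g x|} * a ^ 2 ≤ ∑ x ∈ s with a ≤ |g x|, g x ^ 2 := by
        rw [← nsmul_eq_mul]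
        refine card_nsmul_le_sum _ _ _ fun x hx => ?_
        rw [← sq_abs (g x)]
        exact pow_le_pow_left₀ ha (mem_filter.1 hx).2 2
    _ ≤ ∑ x ∈ s, g x ^ 2 :=
        sum_le_sum_of_subset_of_nonneg (filter_subset _ _) fun _ _ _ => sq_nonneg _

theorem Finset.card_le_of_forall_lt_add {t : Finset ℕ} {m : ℕ}
    (h : ∀ a ∈ t, ∀ b ∈ t, b < a + m) : #t ≤ m := by
  rcases t.eq_empty_or_nonempty with rfl | ht
  · simp
  calc #t ≤ #(Ico (t.min' ht) (t.min' ht + m)) := card_le_card fun b hb =>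
        mem_Ico.2 ⟨min'_le t b hb, h _ (min'_mem t ht) b hb⟩
    _ = m := by simp

theorem card_mul_sq_le_of_card_fiber_le {α : Type*} (s : Finset α) (f : α → ℕ) (μ : ℝ)
    (m M : ℕ) (hM : ∀ k, #{x ∈ s | f x = k} ≤ M) :
    (#s : ℝ) * m ^ 2 ≤ m ^ 3 * M + 4 * ∑ x ∈ s, ((f x : ℝ) - μ) ^ 2 := by
  set W := {x ∈ s | |(f x : ℝ) - μ| < m / 2}
  have hW : #W ≤ M * m := by
    refine (card_le_mul_card_image (f := f) W M fun k _ => (hM k).trans' ?_).trans ?_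
    · exact card_le_card (filter_subset_filter _ (filter_subset _ s))
    · refine Nat.mul_le_mul_left M (card_le_of_forall_lt_add ?_)
      simp only [mem_image, mem_filter, W]
      rintro _ ⟨x, ⟨-, hx⟩, rfl⟩ _ ⟨y, ⟨-, hy⟩, rfl⟩
      have := abs_lt.1 hx
      have := abs_lt.1 hy
      exact_mod_cast (by linarith : (f y : ℝ) < f x + m)
  have hfar := card_filter_le_abs_mul_sq_le_sum_sq s (fun x => (f x : ℝ) - μ)
    (by positivity : (0 : ℝ) ≤ m / 2)
  have hsplit : (#s : ℝ) = #W + #{x ∈ s | ¬ |(f x : ℝ) - μ| < m / 2} := by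
    exact_mod_cast (card_filter_add_card_filter_not (s := s) _).symm
  simp only [not_lt] at hsplit
  have hnear : (#W : ℝ) * m ^ 2 ≤ m ^ 3 * M := by
    have : (#W : ℝ) ≤ M * m := by exact_mod_cast hW
    nlinarith [sq_nonneg (m : ℝ)]
  rw [hsplit]
  nlinarith

theorem exists_mem_Icc_forall_card_fiber_le {α : Type*} [Fintype α] (f : α → ℕ) {a b : ℕ}
    (hab : a ≤ b) (hf : ∀ x, f x ∈ Icc a b) :
    ∃ k ∈ Icc a b, ∀ j, #{x | f x = j} ≤ #{x | f x = k} := by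
  obtain ⟨k, hk, hmax⟩ := exists_max_image (Icc a b) (fun k => #{x | f x = k}) ⟨a, by simpa⟩
  refine ⟨k, hk, fun j => ?_⟩
  by_cases hj : j ∈ Icc a b
  · exact hmax j hj
  · rw [filter_false_of_mem fun x _ (hx : f x = j) => hj (hx ▸ hf x), card_empty]
    exact Nat.zero_le _

theorem sum_val_add_one_mem_Icc {d n : ℕ} (x : Fin d → Fin n) :
    ∑ i, ((x i : ℕ) + 1) ∈ Icc d (d * n) := by
  rw [mem_Icc]
  constructor
  · simpa using sum_le_sum fun i (_ : i ∈ univ) => Nat.le_add_left 1 (x i : ℕ)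
  · simpa [mul_comm] using sum_le_sum fun i (_ : i ∈ univ) => Nat.succ_le_of_lt (x i).isLt

theorem sum_sq_sum_val_add_one_sub_mean (d n : ℕ) :
    ∑ x : Fin d → Fin n, (((∑ i, ((x i : ℕ) + 1) : ℕ) : ℝ) - d * (n + 1) / 2) ^ 2 =
      d * n ^ (d - 1) * (n * ((n : ℝ) ^ 2 - 1) / 12) := by
  have hcentre : ∀ x : Fin d → Fin n, ((∑ i, ((x i : ℕ) + 1) : ℕ) : ℝ) - d * (n + 1) / 2 =
      ∑ i, ((x i : ℝ) - (n - 1) / 2) := by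
    intro x
    push_cast
    simp only [sum_add_distrib, sum_sub_distrib, sum_const, card_univ, Fintype.card_fin,
      nsmul_eq_mul, mul_one]
    ring
  simp_rw [hcentre]
  rw [sum_sq_sum_comp_of_sum_eq_zero _ (sum_fin_val_sub_mean n), sum_fin_val_sub_mean_sq,
    Fintype.card_fin]

/-- Writing `m = N + δ`, the difference of the two sides is `N d - 3 N δ² - 2 δ³`. -/
theorem two_mul_pow_three_le_of_abs_sub_le_half {N m d : ℝ} (hN : 1 ≤ N) (hd : 1 ≤ d)
    (hm : |m - N| ≤ 1 / 2) : 2 * m ^ 3 ≤ N * (3 * m ^ 2 - (N ^ 2 - d)) := by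
  obtain ⟨h₁, h₂⟩ := abs_le.1 hm
  have hδ := mul_nonneg (sub_nonneg.2 h₁) (sub_nonneg.2 h₂)
  nlinarith [mul_nonneg hδ (by linarith : (0 : ℝ) ≤ N + m)]

open Finset in
/-- For `d ≥ 2`, `n ≥ 1`, the maximal level `max_k S_n(k,d)` of the coordinate-sum
function on `[n]^d` is at least `(2/3)·n^{d-1}/√d`. Here `S_n(k,d)` is the number of
tuples `x ∈ [n]^d` with `x_1 + ⋯ + x_d = k` (and the maximum is attained for some
`d ≤ k ≤ dn`). -/
theorem stmt9 (d n : ℕ) (hd : 2 ≤ d) (hn : 1 ≤ n) :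
    ∃ k : ℕ, d ≤ k ∧ k ≤ d * n ∧
      (2 / 3 : ℝ) * (n : ℝ) ^ (d - 1) / Real.sqrt d ≤
        ((univ.filter fun x : Fin d → Fin n => (∑ i, ((x i : ℕ) + 1)) = k).card : ℝ) := by
  obtain ⟨k, hk, hmax⟩ := exists_mem_Icc_forall_card_fiber_le
    (fun x : Fin d → Fin n => ∑ i, ((x i : ℕ) + 1)) (Nat.le_mul_of_pos_right d hn)
    sum_val_add_one_mem_Icc
  refine ⟨k, (mem_Icc.1 hk).1, (mem_Icc.1 hk).2, ?_⟩
  have hd1 : (1 : ℝ) ≤ d := by exact_mod_cast one_le_two.trans hd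
  set N : ℝ := n * √d with hN
  have hN1 : 1 ≤ N :=
    one_le_mul_of_one_le_of_one_le (by exact_mod_cast hn) (Real.one_le_sqrt.2 hd1)
  have hN2 : N ^ 2 - d = d * ((n : ℝ) ^ 2 - 1) := by
    rw [hN, mul_pow, Real.sq_sqrt (by positivity)]
    ring
  set m : ℕ := ⌊N + 1 / 2⌋₊
  have hm : |(m : ℝ) - N| ≤ 1 / 2 := abs_le.2
    ⟨by linarith [Nat.lt_floor_add_one (N + 1 / 2)],
      by linarith [Nat.floor_le (by positivity : 0 ≤ N + 1 / 2)]⟩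
  have hm0 : (0 : ℝ) < m := by linarith [(abs_le.1 hm).1]
  have hchebyshev := card_mul_sq_le_of_card_fiber_le univ _ (d * (n + 1) / 2) m _ hmax
  have hpow : (n : ℝ) ^ d = n ^ (d - 1) * n := by
    rw [← pow_succ]
    congr 1
    omega
  rw [sum_sq_sum_val_add_one_sub_mean, card_univ, Fintype.card_fun, Fintype.card_fin,
    Fintype.card_fin, Nat.cast_pow, hpow] at hchebyshev
  set M : ℝ := (#{x : Fin d → Fin n | ∑ i, ((x i : ℕ) + 1) = k} : ℝ)
  have hlevel : (n : ℝ) ^ (d - 1) * (N * (3 * m ^ 2 - (N ^ 2 - d))) ≤ 3 * √d * (m ^ 3 * M) := by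
    rw [hN2]
    linear_combination (3 * √d) * hchebyshev
  have hwidth := mul_le_mul_of_nonneg_left (two_mul_pow_three_le_of_abs_sub_le_half hN1 hd1 hm)
    (by positivity : (0 : ℝ) ≤ n ^ (d - 1))
  rw [div_le_iff₀ (by positivity)]
  refine le_of_mul_le_mul_right ?_ (pow_pos hm0 3)
  linarith
end

section
/- For every q ≥ 2 and n ≥ 2, 2^{(2/3)·n^{q-1}/√q} ≤ N_3(q,n) ≤ 2^{2n^{q-1}}, where N_3(q,n) is the smallest N such that every q-coloring of the triples of {1,...,N} contains a monochromatic monotone path of length n. -/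
/-- `N_3(q,n)`: the least `N` such that every `q`-coloring of the triples of `{1,…,N}`
contains a monochromatic monotone path of length `n`. -/
noncomputable def N3 (q n : ℕ) : ℕ :=
  sInf {N : ℕ | ∀ c : Fin N → Fin N → Fin N → Fin q, HasMonoPath3 n c}

/-!
Upper bound: if a colouring of the triples of `Fin N` has no monochromatic monotone path of
length `n`, record for every pair `i < j` the vector in `[n]^q` whose `m`-th entry is the length of
the longest path of colour `m` starting with `(i, j)`. For `i < j < k` the vector of `(i, j)` is
strictly larger than that of `(j, k)` in the colour of `{i, j, k}`, so the sets
`{p | ∀ i < j, ¬ v i j ≤ p}` are pairwise distinct down-sets of `[n]^q`. Slicing a down-set of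
`[n]^q` into down-sets of `[n]^2`, which are lattice paths, there are fewer than `4^(n^(q-1))`
of them.

Lower bound: index the subsets of an antichain `A` of `[n]^q` by the binary digits of
`0, …, 2^|A| - 1`. For `i < j` some element `w i j` of `A` lies in the set of `j` but not in that of
`i`; colour `i < j < k` by a coordinate in which `w i j < w j k`. A monochromatic path of length `n`
would give `n + 1` strictly increasing values in `Fin n`. A largest layer `∑ xᵢ = t` of `[n]^q`
is an antichain, and since `∑ xᵢ` has variance `q (n² - 1) / 12`, some layer has at least
`(2/3) n^(q-1) / √q` elements.
-/

open Finset

theorem Nat.card_lowerSet_prod_le {α β : Type*} [Preorder α] [Preorder β] [Finite α] [Finite β] :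
    Nat.card (LowerSet (α × β)) ≤ Nat.card (LowerSet β) ^ Nat.card α := by
  rw [← Nat.card_fun]
  refine Nat.card_le_card_of_injective
    (fun S a => ⟨{b | (a, b) ∈ S}, fun _ _ hb h => S.lower (by simp [hb]) h⟩) fun S T h => ?_
  ext ⟨a, b⟩
  exact Set.ext_iff.mp (congrArg SetLike.coe (congrFun h a)) b

theorem Nat.card_lowerSet_congr {α β : Type*} [Preorder α] [Preorder β] (e : α ≃o β) :
    Nat.card (LowerSet α) = Nat.card (LowerSet β) :=
  Nat.card_congr (LowerSet.map e).toEquiv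

namespace LowerSet

variable {α : Type*} [Preorder α] {n : ℕ}

open Classical in
noncomputable def height (S : LowerSet (α × Fin n)) (a : α) : ℕ := #{b | (a, b) ∈ S}

theorem height_le (S : LowerSet (α × Fin n)) (a : α) : S.height a ≤ n :=
  (card_le_univ _).trans_eq (Fintype.card_fin n)

theorem height_anti (S : LowerSet (α × Fin n)) : Antitone S.height := fun a a' h =>
  card_le_card fun b hb => by
    simp only [mem_filter, mem_univ, true_and] at hb ⊢
    exact S.lower (by simp [h]) hb

theorem mk_mem_iff_lt_height {S : LowerSet (α × Fin n)} {a : α} {b : Fin n} :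
    (a, b) ∈ S ↔ (b : ℕ) < S.height a := by
  classical
  constructor
  · intro hb
    have : Finset.Iic b ⊆ ({b | (a, b) ∈ S} : Finset (Fin n)) := fun b' hb' => by
      simpa using S.lower (by simpa using Finset.mem_Iic.mp hb') hb
    simpa [height] using (card_le_card this).trans_lt' (by simp)
  · intro hlt
    by_contra hb
    have : ({b | (a, b) ∈ S} : Finset (Fin n)) ⊆ Finset.Iio b := fun b' hb' => by
      simp only [mem_filter, mem_univ, true_and] at hb'
      exact Finset.mem_Iio.mpr (lt_of_not_ge fun h => hb (S.lower (by simpa using h) hb'))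
    have := (card_le_card this).trans_eq (Fin.card_Iio b)
    exact hlt.not_ge this

theorem height_injective : Function.Injective (height : LowerSet (α × Fin n) → α → ℕ) :=
  fun S T h => SetLike.ext fun ⟨a, b⟩ => by rw [mk_mem_iff_lt_height, mk_mem_iff_lt_height, h]

end LowerSet

/-- Column `a` of a lower set of `Fin m × Fin n` is the `a`-th horizontal step of its boundary
lattice path, taken after `n - height a` vertical steps. -/
theorem card_lowerSet_fin_prod_fin_le (m n : ℕ) :
    Nat.card (LowerSet (Fin m × Fin n)) ≤ (m + n).choose m := by
  let path (S : LowerSet (Fin m × Fin n)) (a : Fin m) : Fin (m + n) :=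
    ⟨a + (n - S.height a), by have := S.height_le a; omega⟩
  have path_mono (S) : StrictMono (path S) := fun a a' h => by
    have := S.height_anti h.le
    have := S.height_le a
    simp only [path, Fin.lt_def] at h ⊢
    omega
  have path_inj : Function.Injective fun S => image (path S) univ := fun S T h =>
    LowerSet.height_injective <| funext fun a => by
      have hST := Set.range_injOn_strictMono (path_mono S) (path_mono T)
        (by simpa using congrArg SetLike.coe h)
      have := congrArg Fin.val (congrFun hST a)
      have := S.height_le a
      have := T.height_le a
      simp only [path] at *
      omega
  calc Nat.card (LowerSet (Fin m × Fin n))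
      ≤ Nat.card (powersetCard m (univ : Finset (Fin (m + n)))) :=
        Nat.card_le_card_of_injective
          (fun S => ⟨image (path S) univ, by
            simp [mem_powersetCard, card_image_of_injective _ (path_mono S).injective]⟩)
          fun S T h => path_inj (congrArg Subtype.val h)
    _ = (m + n).choose m := by simp

theorem card_lowerSet_fin_pi_le (n k : ℕ) :
    Nat.card (LowerSet (Fin (k + 2) → Fin n)) ≤ n.centralBinom ^ n ^ k := by
  induction k with
  | zero =>
    rw [Nat.card_lowerSet_congr (OrderIso.finTwoArrowIso (Fin n)), Nat.centralBinom, two_mul]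
    simpa using card_lowerSet_fin_prod_fin_le n n
  | succ k ih =>
    rw [← Nat.card_lowerSet_congr (Fin.consOrderIso fun _ => Fin n), pow_succ, pow_mul]
    exact Nat.card_lowerSet_prod_le.trans (by simpa using Nat.pow_le_pow_left ih n)

theorem card_lowerSet_fin_pi_lt {q n : ℕ} (hq : 2 ≤ q) (hn : n ≠ 0) :
    Nat.card (LowerSet (Fin q → Fin n)) < 2 ^ (2 * n ^ (q - 1)) := by
  obtain ⟨k, rfl⟩ := Nat.exists_eq_add_of_le' hq
  calc Nat.card (LowerSet (Fin (k + 2) → Fin n)) ≤ n.centralBinom ^ n ^ k :=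
        card_lowerSet_fin_pi_le n k
    _ < (4 ^ n) ^ n ^ k := Nat.pow_lt_pow_left (Nat.centralBinom_lt_four_pow hn) (by positivity)
    _ = 2 ^ (2 * n ^ (k + 2 - 1)) := by
        rw [show k + 2 - 1 = k + 1 by omega, ← pow_mul, pow_succ, show (4 : ℕ) = 2 ^ 2 by rfl,
          ← pow_mul]
        ring_nf

theorem le_card_lowerSet_of_forall_not_le {P : Type*} [Preorder P] [Finite P] {N : ℕ}
    (v : Fin N → Fin N → P) (hv : ∀ i j k, i < j → j < k → ¬ v i j ≤ v j k) : N ≤ Nat.card (LowerSet P) := by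
  let D (j : Fin N) : LowerSet P :=
    ⟨{p | ∀ i < j, ¬ v i j ≤ p}, fun _ _ hle hp i hi h => hp i hi (h.trans hle)⟩
  have hD {a b : Fin N} (hab : a < b) : D a ≠ D b := fun h => by
    have : v a b ∈ D a := fun i hi => hv i a b hi hab
    exact (h ▸ this : v a b ∈ D b) a hab le_rfl
  simpa using Nat.card_le_card_of_injective D fun a b h => by
    by_contra hne
    rcases lt_or_gt_of_ne hne with hab | hab
    exacts [hD hab h, hD hab h.symm]

namespace HasMonoPath3

variable {N q : ℕ} (c : Fin N → Fin N → Fin N → Fin q)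

def chainLen (m : Fin q) (i j : Fin N) : ℕ :=
  (Ioi j).attach.sup fun k => if c i j k = m then chainLen m j k + 1 else 0
termination_by N - j
decreasing_by have := mem_Ioi.mp k.2; omega

variable {c}

theorem chainLen_lt_chainLen {m : Fin q} {i j k : Fin N} (hjk : j < k) (h : c i j k = m) :
    chainLen c m j k < chainLen c m i j := by
  rw [chainLen.eq_1 c m i j]
  exact Nat.lt_of_succ_le <| by
    simpa [h] using le_sup (f := fun k : Ioi j => if c i j k = m then chainLen c m j k + 1 else 0)
      (mem_attach _ ⟨k, mem_Ioi.mpr hjk⟩)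

theorem exists_path_of_le_chainLen {m : Fin q} (L : ℕ) {i j : Fin N} (hij : i < j)
    (hL : L ≤ chainLen c m i j) :
    ∃ x : Fin (L + 2) → Fin N, StrictMono x ∧ x 0 = i ∧ x 1 = j ∧
      ∀ l : ℕ, ∀ _ : l < L,
        c (x ⟨l, by omega⟩) (x ⟨l + 1, by omega⟩) (x ⟨l + 2, by omega⟩) = m := by
  induction L generalizing i j with
  | zero => exact ⟨![i, j], by simpa [Fin.strictMono_iff_lt_succ] using hij, rfl, rfl, by simp⟩
  | succ L ih =>
    rw [chainLen, Finset.le_sup_iff (by simp)] at hL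
    obtain ⟨⟨k, hk⟩, -, hLk⟩ := hL
    dsimp only at hLk
    have hcol : c i j k = m := by by_contra h; simp [h] at hLk
    rw [if_pos hcol] at hLk
    obtain ⟨y, hy, hy0, hy1, hym⟩ := ih (mem_Ioi.mp hk) (by omega)
    refine ⟨Fin.cons i y, Fin.strictMono_cons.mpr ⟨fun l => ?_, hy⟩, rfl, hy0, ?_⟩
    · exact hij.trans_le (hy0 ▸ hy.monotone (Fin.zero_le l))
    · rintro (_ | l) hl
      · rw [← hy0, ← hy1] at hcol
        exact hcol
      · exact hym l (by omega)

theorem chainLen_lt {n : ℕ} (h : ¬ HasMonoPath3 n c) (m : Fin q) {i j : Fin N} (hij : i < j) :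
    chainLen c m i j < n := by
  by_contra! hn
  obtain ⟨x, hx, -, -, hxm⟩ := exists_path_of_le_chainLen n hij hn
  exact h ⟨x, hx, m, hxm⟩

theorem le_card_lowerSet {n : ℕ} (hn : n ≠ 0) (h : ¬ HasMonoPath3 n c) :
    N ≤ Nat.card (LowerSet (Fin q → Fin n)) := by
  -- the truncation at `n - 1` only matters off `i < j`
  refine le_card_lowerSet_of_forall_not_le
    (fun i j m => ⟨min (chainLen c m i j) (n - 1), by omega⟩) fun i j k hij hjk hle => ?_
  have hle' : min (chainLen c (c i j k) i j) (n - 1) ≤ min (chainLen c (c i j k) j k) (n - 1) :=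
    hle (c i j k)
  have := chainLen_lt_chainLen hjk (m := c i j k) rfl
  have := chainLen_lt h (c i j k) hij
  have := chainLen_lt h (c i j k) hjk
  omega

end HasMonoPath3

theorem Nat.exists_testBit_of_lt {i j d : ℕ} (hij : i < j) (hj : j < 2 ^ d) :
    ∃ b : Fin d, j.testBit b ∧ ¬ i.testBit b := by
  by_contra! h
  refine hij.not_ge (Nat.le_of_testBit fun b hb => ?_)
  by_cases hbd : b < d
  · exact h ⟨b, hbd⟩ hb
  · rw [Nat.testBit_lt_two_pow (hj.trans_le (Nat.pow_le_pow_right two_pos (not_lt.mp hbd)))] at hb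
    exact absurd hb (by simp)

theorem exists_not_hasMonoPath3_of_isAntichain {q n N : ℕ} (hq : q ≠ 0) {A : Finset (Fin q → Fin n)}
    (hA : IsAntichain (· ≤ ·) (A : Set (Fin q → Fin n))) (hN : N ≤ 2 ^ #A) :
    ∃ c : Fin N → Fin N → Fin N → Fin q, ¬ HasMonoPath3 n c := by
  have hbit (i j : Fin N) (hij : i < j) : ∃ b : Fin #A, (j : ℕ).testBit b ∧ ¬ (i : ℕ).testBit b :=
    Nat.exists_testBit_of_lt hij (j.2.trans_le hN)
  choose bit hbit using hbit
  let w (i j : Fin N) (hij : i < j) : Fin q → Fin n := A.equivFin.symm (bit i j hij)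
  have hcol (i j k : Fin N) (hij : i < j) (hjk : j < k) : ∃ m, w i j hij m < w j k hjk m := by
    have hne : w j k hjk ≠ w i j hij := fun h => by
      have := A.equivFin.symm.injective (Subtype.ext h)
      have := (hbit j k hjk).2
      simp_all [(hbit i j hij).1]
    simpa [Pi.le_def] using hA (Subtype.prop _) (Subtype.prop _) hne
  choose col hcol using hcol
  refine ⟨fun i j k => if h : i < j ∧ j < k then col i j k h.1 h.2 else ⟨0, by omega⟩, ?_⟩
  rintro ⟨x, hx, m, hm⟩
  let g (l : Fin (n + 1)) : Fin n := w (x l.castSucc) (x l.succ) (hx l.castSucc_lt_succ) m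
  have hg : StrictMono g := Fin.strictMono_iff_lt_succ.mpr fun l => by
    have hl := hm l l.2
    dsimp only at hl
    split_ifs at hl with h
    · have := hcol _ _ _ h.1 h.2
      rw [hl] at this
      exact this
    · exact absurd ⟨hx l.castSucc.castSucc_lt_succ, hx l.succ.castSucc_lt_succ⟩ h
  simpa using Fintype.card_le_of_injective g hg.injective

theorem Finset.sum_sq_sum_eq_of_sum_eq_zero {α R : Type*} [Fintype α] [CommRing R] {a : α → R}
    (ha : ∑ b, a b = 0) (q : ℕ) :
    ∑ x : Fin q → α, (∑ i, a (x i)) ^ 2 = q * Fintype.card α ^ (q - 1) * ∑ b, a b ^ 2 := by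
  induction q with
  | zero => simp
  | succ q ih =>
    rw [← (Fin.consEquiv fun _ => α).sum_comp, Fintype.sum_prod_type]
    simp only [Fin.consEquiv_apply, Fin.sum_univ_succ, Fin.cons_zero, Fin.cons_succ, add_sq,
      sum_add_distrib, sum_const, card_univ, nsmul_eq_mul, ← mul_sum, ← sum_mul, ha, ih]
    cases q <;> simp [pow_succ]; ring

theorem Fin.sum_two_mul_sub (n : ℕ) : ∑ b : Fin n, (2 * (b : ℤ) - (n - 1)) = 0 := by
  suffices ∀ c : ℤ, ∑ i ∈ range n, (2 * (i : ℤ) - c) = n * (n - 1) - n * c by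
    rw [Fin.sum_univ_eq_sum_range (fun i => 2 * (i : ℤ) - (n - 1)), this]; ring
  intro c
  induction n with
  | zero => simp
  | succ n ih => rw [sum_range_succ, ih]; push_cast; ring

theorem Fin.sum_two_mul_sub_sq (n : ℕ) :
    3 * ∑ b : Fin n, (2 * (b : ℤ) - (n - 1)) ^ 2 = n * ((n : ℤ) ^ 2 - 1) := by
  suffices ∀ c : ℤ, 3 * ∑ i ∈ range n, (2 * (i : ℤ) - c) ^ 2 =
      2 * n * (n - 1) * (2 * n - 1) - 6 * c * n * (n - 1) + 3 * n * c ^ 2 by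
    rw [Fin.sum_univ_eq_sum_range (fun i => (2 * (i : ℤ) - (n - 1)) ^ 2), this]; ring
  intro c
  induction n with
  | zero => simp
  | succ n ih => rw [sum_range_succ, mul_add, ih]; push_cast; ring

def coordSum {q n : ℕ} (x : Fin q → Fin n) : ℕ := ∑ i, (x i : ℕ)

def layer (q n t : ℕ) : Finset (Fin q → Fin n) := {x | coordSum x = t}

theorem isAntichain_layer (q n t : ℕ) :
    IsAntichain (· ≤ ·) (layer q n t : Set (Fin q → Fin n)) := by
  intro x hx y hy hne hle
  simp only [layer, coe_filter, mem_univ, true_and, Set.mem_ofPred_eq] at hx hy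
  have hsum : ∑ i, (x i : ℕ) = ∑ i, (y i : ℕ) := hx.trans hy.symm
  exact hne <| funext fun i => Fin.ext <|
    (sum_eq_sum_iff_of_le fun i _ => Fin.le_iff_val_le_val.mp (hle i)).mp hsum i (mem_univ i)

theorem three_mul_sum_sq_coordSum (q n : ℕ) :
    3 * ∑ x : Fin q → Fin n, (2 * (coordSum x : ℤ) - q * (n - 1)) ^ 2 =
      q * (n : ℤ) ^ q * ((n : ℤ) ^ 2 - 1) := by
  have hx (x : Fin q → Fin n) :
      2 * (coordSum x : ℤ) - q * (n - 1) = ∑ i, (2 * (x i : ℤ) - (n - 1)) := by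
    simp [coordSum, sum_sub_distrib, mul_sum]
    ring
  simp_rw [hx, sum_sq_sum_eq_of_sum_eq_zero (Fin.sum_two_mul_sub n), mul_left_comm (3 : ℤ),
    Fin.sum_two_mul_sub_sq]
  cases q <;> simp [pow_succ]; ring

theorem Finset.sq_mul_card_le_sum_sq_add {α : Type*} {s : Finset α} {D : α → ℕ} {M : ℕ}
    (hD : ∀ j, #{x ∈ s | D x ≤ j} ≤ (j + 1) * M) (K : ℕ) :
    K ^ 2 * #s ≤ ∑ x ∈ s, D x ^ 2 + M * ∑ j ∈ range K, (2 * j + 1) * (j + 1) := by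
  have odd_sum (d : ℕ) : ∑ j ∈ range d, (2 * j + 1) = d ^ 2 := by
    induction d with
    | zero => simp
    | succ d ih => rw [sum_range_succ, ih]; ring
  have layer_cake (d : ℕ) : ∑ j ∈ range K, (if j < d then 2 * j + 1 else 0) ≤ d ^ 2 := by
    rw [← sum_filter, ← odd_sum d]
    exact sum_le_sum_of_subset fun j hj => by simp at hj ⊢; exact hj.2
  calc K ^ 2 * #s
      = ∑ j ∈ range K, (2 * j + 1) * (#{x ∈ s | j < D x} + #{x ∈ s | ¬ j < D x}) := by
        simp_rw [card_filter_add_card_filter_not, ← sum_mul, odd_sum]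
    _ ≤ ∑ j ∈ range K, ((2 * j + 1) * #{x ∈ s | j < D x} + M * ((2 * j + 1) * (j + 1))) := by
        refine sum_le_sum fun j _ => ?_
        rw [mul_add]
        have := hD j
        simp only [not_lt]
        nlinarith
    _ = ∑ x ∈ s, ∑ j ∈ range K, (if j < D x then 2 * j + 1 else 0) +
          M * ∑ j ∈ range K, (2 * j + 1) * (j + 1) := by
        rw [sum_add_distrib, ← mul_sum, sum_comm]
        congr 1
        refine sum_congr rfl fun j _ => ?_
        rw [card_filter, mul_sum]
        simp only [mul_boole]
    _ ≤ _ := add_le_add (sum_le_sum fun x _ => layer_cake (D x)) le_rfl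

theorem Finset.card_filter_natAbs_le {α : Type*} {s : Finset α} (f : α → ℕ) (μ : ℤ) {M : ℕ}
    (hM : ∀ t, #{x ∈ s | f x = t} ≤ M) (j : ℕ) :
    #{x ∈ s | (2 * (f x : ℤ) - μ).natAbs ≤ j} ≤ (j + 1) * M := by
  have hmaps : ∀ x ∈ {x ∈ s | (2 * (f x : ℤ) - μ).natAbs ≤ j},
      f x ∈ Icc ((μ - j + 1) / 2).toNat ((μ + j) / 2).toNat := fun x hx => by
    simp only [mem_filter] at hx
    simp only [mem_Icc]
    omega
  calc _ ≤ M * #(Icc ((μ - j + 1) / 2).toNat ((μ + j) / 2).toNat) :=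
        card_le_mul_card_image_of_maps_to hmaps M fun t _ =>
          (card_le_card (filter_subset_filter _ (filter_subset _ s))).trans (hM t)
    _ ≤ (j + 1) * M := by rw [Nat.card_Icc, mul_comm]; gcongr; omega

theorem sub_one_mul_two_mul_sub_one_le {q n M K : ℕ} (hn : 0 < n) (hM : ∀ t, #(layer q n t) ≤ M)
    (hKM : K * M ≤ n ^ q) : (K - 1) * (2 * K - 1) ≤ 2 * q * (n ^ 2 - 1) := by
  rcases Nat.eq_zero_or_pos K with rfl | hK
  · simp
  let D (x : Fin q → Fin n) : ℕ := (2 * (coordSum x : ℤ) - q * (n - 1)).natAbs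
  have hbath := sq_mul_card_le_sum_sq_add (card_filter_natAbs_le coordSum (q * (n - 1)) hM) K
  have hsum : 6 * ∑ j ∈ range K, (2 * j + 1) * (j + 1) + K = 4 * K ^ 3 + 3 * K ^ 2 := by
    clear hbath hKM hK
    induction K with
    | zero => simp
    | succ k ih => rw [sum_range_succ]; nlinarith
  have hvar : 3 * ∑ x, (D x : ℤ) ^ 2 = q * n ^ q * ((n : ℤ) ^ 2 - 1) := by
    simp only [D, Int.natAbs_sq]; exact three_mul_sum_sq_coordSum q n
  rw [card_univ, Fintype.card_pi, prod_const, card_univ, Fintype.card_fin, Fintype.card_fin]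
    at hbath
  set P := ∑ j ∈ range K, (2 * j + 1) * (j + 1)
  have hbath' : (K : ℤ) ^ 2 * n ^ q ≤ ∑ x, (D x : ℤ) ^ 2 + M * P := by exact_mod_cast hbath
  have hMsum : (M : ℤ) * (6 * P + K) = M * (4 * K ^ 3 + 3 * K ^ 2) := by
    exact_mod_cast congrArg (M * ·) hsum
  -- `K M ≤ n^q` turns `M (4K³ + 3K² - K)` into at most `n^q (4K² + 3K - 1)`
  have hKM' : (K : ℤ) * M * (4 * K ^ 2 + 3 * K - 1) ≤ n ^ q * (4 * K ^ 2 + 3 * K - 1) :=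
    mul_le_mul_of_nonneg_right (by exact_mod_cast hKM) (by nlinarith)
  have key : (n : ℤ) ^ q * ((K - 1) * (2 * K - 1)) ≤ n ^ q * (2 * q * (n ^ 2 - 1)) := by
    linarith
  zify [hK, (by omega : 1 ≤ 2 * K), Nat.one_le_pow 2 n hn]
  exact le_of_mul_le_mul_left key (by positivity)

theorem four_mul_sq_le_of_card_layer_le {q n M : ℕ} (hq : 2 ≤ q) (hn : 2 ≤ n)
    (hM : ∀ t, #(layer q n t) ≤ M) : 4 * (n ^ (q - 1)) ^ 2 ≤ 9 * q * M ^ 2 := by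
  have hMpos : 0 < M := by
    let x₀ : Fin q → Fin n := fun _ => ⟨0, by omega⟩
    exact (card_pos.mpr ⟨x₀, by simp [layer]⟩).trans_le (hM (coordSum x₀))
  have hK := sub_one_mul_two_mul_sub_one_le (by omega) hM (Nat.div_mul_le_self (n ^ q) M)
  set K := n ^ q / M
  have hTK : n ^ q < (K + 1) * M := by rw [add_one_mul]; exact Nat.lt_div_mul_add hMpos
  have hKq : 4 * (K + 1) ^ 2 ≤ 9 * q * n ^ 2 := by
    have hqn : 8 ≤ q * n ^ 2 := by nlinarith
    rcases Nat.lt_or_ge K 4 with hK4 | hK4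
    · nlinarith
    · zify [(by omega : 1 ≤ K), (by omega : 1 ≤ 2 * K), Nat.one_le_pow 2 n (by omega)] at hK ⊢
      nlinarith
  have hTn : n ^ q = n ^ (q - 1) * n := by rw [← pow_succ]; congr; omega
  refine Nat.le_of_mul_le_mul_right (c := n ^ 2) ?_ (by positivity)
  calc 4 * (n ^ (q - 1)) ^ 2 * n ^ 2 = 4 * (n ^ q) ^ 2 := by rw [hTn]; ring
    _ ≤ 4 * ((K + 1) * M) ^ 2 := by gcongr
    _ ≤ 9 * q * M ^ 2 * n ^ 2 := by nlinarith

theorem exists_isAntichain_card_ge {q n : ℕ} (hq : 2 ≤ q) (hn : 2 ≤ n) :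
    ∃ A : Finset (Fin q → Fin n), IsAntichain (· ≤ ·) (A : Set (Fin q → Fin n)) ∧
      (2 / 3 : ℝ) * n ^ (q - 1) / √q ≤ #A := by
  obtain ⟨x₀, -, hx₀⟩ := exists_max_image univ (fun x => #(layer q n (coordSum x)))
    ⟨(fun _ => ⟨0, by omega⟩ : Fin q → Fin n), mem_univ _⟩
  set A := layer q n (coordSum x₀)
  refine ⟨A, isAntichain_layer _ _ _, ?_⟩
  have hM (t : ℕ) : #(layer q n t) ≤ #A := by
    rcases (layer q n t).eq_empty_or_nonempty with h | ⟨x, hx⟩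
    · simp [h]
    · simp only [layer, mem_filter] at hx
      exact hx.2 ▸ hx₀ x (mem_univ x)
  have h : (4 : ℝ) * (n ^ (q - 1)) ^ 2 ≤ 9 * q * #A ^ 2 := by
    exact_mod_cast four_mul_sq_le_of_card_layer_le hq hn hM
  rw [div_le_iff₀ (by positivity)]
  calc (2 / 3 : ℝ) * n ^ (q - 1) ≤ √(#A ^ 2 * q) := Real.le_sqrt_of_sq_le (by nlinarith)
    _ = #A * √q := by
        rw [Real.sqrt_mul (sq_nonneg _), Real.sqrt_sq (Nat.cast_nonneg _)]

theorem lt_N3_of_forall_le {q n N L : ℕ}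
    (hN : ∀ c : Fin N → Fin N → Fin N → Fin q, HasMonoPath3 n c)
    (hL : ∀ N' ≤ L, ∃ c : Fin N' → Fin N' → Fin N' → Fin q, ¬ HasMonoPath3 n c) : L < N3 q n := by
  by_contra! h
  obtain ⟨c, hc⟩ := hL _ h
  have hmem : N3 q n ∈ {N : ℕ | ∀ c : Fin N → Fin N → Fin N → Fin q, HasMonoPath3 n c} :=
    Nat.sInf_mem ⟨N, hN⟩
  exact hc (hmem c)

theorem HasMonoPath3.of_two_pow {q n : ℕ} (hq : 2 ≤ q) (hn : n ≠ 0)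
    (c : Fin (2 ^ (2 * n ^ (q - 1))) → Fin (2 ^ (2 * n ^ (q - 1))) → Fin (2 ^ (2 * n ^ (q - 1))) →
      Fin q) : HasMonoPath3 n c := by
  by_contra h
  exact (HasMonoPath3.le_card_lowerSet hn h).not_gt (card_lowerSet_fin_pi_lt hq hn)

/-- For every `q ≥ 2` and `n ≥ 2`, `2^{(2/3)·n^{q-1}/√q} ≤ N_3(q,n) ≤ 2^{2n^{q-1}}`. -/
theorem stmt13 (q n : ℕ) (hq : 2 ≤ q) (hn : 2 ≤ n) :
    (2 : ℝ) ^ ((2 / 3 : ℝ) * (n : ℝ) ^ (q - 1) / Real.sqrt q) ≤ (N3 q n : ℝ) ∧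
    N3 q n ≤ 2 ^ (2 * n ^ (q - 1)) := by
  have hup := HasMonoPath3.of_two_pow hq (n := n) (by omega)
  obtain ⟨A, hA, hcard⟩ := exists_isAntichain_card_ge hq hn
  have hlow : 2 ^ #A < N3 q n := lt_N3_of_forall_le hup fun _ hN =>
    exists_not_hasMonoPath3_of_isAntichain (by omega) hA hN
  refine ⟨?_, Nat.sInf_le hup⟩
  calc (2 : ℝ) ^ ((2 / 3 : ℝ) * (n : ℝ) ^ (q - 1) / Real.sqrt q)
      ≤ 2 ^ (#A : ℝ) := Real.rpow_le_rpow_of_exponent_le one_le_two hcard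
    _ = ((2 ^ #A : ℕ) : ℝ) := by norm_cast
    _ ≤ N3 q n := by exact_mod_cast hlow.le
end

section
/- For every q ≥ 2 and n ≥ 2, every q-coloring of the edges (pairs) of the complete graph on vertex set {1,...,n^q + 1} contains a monochromatic monotone path with n edges; i.e., N_2(q,n) ≤ n^q + 1. Moreover this is tight: there is a q-coloring of the pairs of {1,...,n^q} with no monochromatic monotone path of n edges. -/
/-!
A monochromatic monotone path with `n` edges is excluded exactly when there are labels
`f j : Fin N → Fin n`, one per colour, that strictly increase along every edge of colour `j`.
Given no path, the length of the longest path of colour `j` ending at a vertex is such a label;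
the vector of labels of a vertex is then injective (the edge between two vertices increases
one of its coordinates), so `N ≤ n ^ q`. Conversely, on `Fin (n ^ q) ≃ (Fin q → Fin n)` the
base-`n` digits themselves are such labels once each edge `u < v` is coloured by a digit position in
which `v` exceeds `u`; one exists because the value of a number is monotone in its digits.
-/

/-- Monochromatic monotone path with `n` edges in a coloring of the pairs of
`{0,…,N-1}`: vertices `x_0 < x_1 < ⋯ < x_n` with all edges `{x_i, x_{i+1}}` of the
same color. -/
def HasMonoPath2 {N q : ℕ} (n : ℕ) (c : Fin N → Fin N → Fin q) : Prop :=
  ∃ x : Fin (n + 1) → Fin N, StrictMono x ∧ ∃ col : Fin q,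
    ∀ i : ℕ, ∀ _ : i < n, c (x ⟨i, by omega⟩) (x ⟨i + 1, by omega⟩) = col

namespace HasMonoPath2

variable {N q : ℕ} (c : Fin N → Fin N → Fin q)

def IsMonoPathTo (j : Fin q) (m : ℕ) (v : Fin N) : Prop :=
  ∃ x : Fin (m + 1) → Fin N, x (Fin.last m) = v ∧
    ∀ i : Fin m, x i.castSucc < x i.succ ∧ c (x i.castSucc) (x i.succ) = j

variable {c}

theorem isMonoPathTo_zero (j : Fin q) (v : Fin N) : IsMonoPathTo c j 0 v :=
  ⟨fun _ => v, rfl, fun i => i.elim0⟩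

theorem IsMonoPathTo.snoc {j : Fin q} {m : ℕ} {u v : Fin N} (h : IsMonoPathTo c j m u)
    (huv : u < v) (hc : c u v = j) : IsMonoPathTo c j (m + 1) v := by
  obtain ⟨x, rfl, hx⟩ := h
  refine ⟨Fin.snoc x v, Fin.snoc_last _ _, Fin.lastCases ?_ fun i => ?_⟩
  · simpa [Fin.succ_last] using ⟨huv, hc⟩
  · rw [Fin.succ_castSucc, Fin.snoc_castSucc, Fin.snoc_castSucc]
    exact hx i

theorem IsMonoPathTo.lt {j : Fin q} {m : ℕ} {v : Fin N} (h : IsMonoPathTo c j m v) : m < N := by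
  obtain ⟨x, -, hx⟩ := h
  exact Fin.le_of_injective x (Fin.strictMono_iff_lt_succ.mpr fun i => (hx i).1).injective

theorem IsMonoPathTo.hasMonoPath2 {j : Fin q} {m n : ℕ} {v : Fin N} (h : IsMonoPathTo c j m v)
    (hnm : n ≤ m) : HasMonoPath2 n c := by
  obtain ⟨x, -, hx⟩ := h
  refine ⟨x ∘ Fin.castLE (by omega), ?_, j, fun i hi => (hx ⟨i, by omega⟩).2⟩
  exact (Fin.strictMono_iff_lt_succ.mpr fun i => (hx i).1).comp (Fin.strictMono_castLE _)

open Classical in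
noncomputable def monoPathLen (c : Fin N → Fin N → Fin q) (j : Fin q) (v : Fin N) : ℕ :=
  Nat.findGreatest (fun m => IsMonoPathTo c j m v) N

open Classical in
theorem isMonoPathTo_monoPathLen (j : Fin q) (v : Fin N) :
    IsMonoPathTo c j (monoPathLen c j v) v :=
  Nat.findGreatest_spec (P := fun m => IsMonoPathTo c j m v) (Nat.zero_le N)
    (isMonoPathTo_zero j v)

open Classical in
theorem monoPathLen_lt_monoPathLen {u v : Fin N} (huv : u < v) :
    monoPathLen c (c u v) u < monoPathLen c (c u v) v := by
  have hv := (isMonoPathTo_monoPathLen (c u v) u).snoc huv rfl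
  exact Nat.le_findGreatest hv.lt.le hv

theorem monoPathLen_lt {n : ℕ} (h : ¬ HasMonoPath2 n c) (j : Fin q) (v : Fin N) :
    monoPathLen c j v < n :=
  lt_of_not_ge fun hn => h ((isMonoPathTo_monoPathLen j v).hasMonoPath2 hn)

end HasMonoPath2

open HasMonoPath2 in
theorem not_hasMonoPath2_iff {N q n : ℕ} (c : Fin N → Fin N → Fin q) :
    ¬ HasMonoPath2 n c ↔
      ∃ f : Fin q → Fin N → Fin n, ∀ u v, u < v → f (c u v) u < f (c u v) v := by
  constructor
  · intro h
    exact ⟨fun j v => ⟨monoPathLen c j v, monoPathLen_lt h j v⟩,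
      fun u v huv => monoPathLen_lt_monoPathLen huv⟩
  · rintro ⟨f, hf⟩ ⟨x, hx, col, hcol⟩
    have hmono : StrictMono (f col ∘ x) := Fin.strictMono_iff_lt_succ.mpr fun i => by
      have hi : c (x i.castSucc) (x i.succ) = col := hcol i i.isLt
      simpa [hi] using hf _ _ (hx i.castSucc_lt_succ)
    simpa using Fin.le_of_injective _ hmono.injective

theorem card_le_pow_of_not_hasMonoPath2 {N q n : ℕ} {c : Fin N → Fin N → Fin q}
    (h : ¬ HasMonoPath2 n c) : N ≤ n ^ q := by
  obtain ⟨f, hf⟩ := (not_hasMonoPath2_iff c).mp h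
  have hinj : Function.Injective fun v j => f j v :=
    .of_lt_imp_ne fun u v huv heq => (hf u v huv).ne (congrFun heq (c u v))
  simpa using Fintype.card_le_of_injective _ hinj

theorem exists_digit_lt {q n : ℕ} {u v : Fin (n ^ q)} (huv : u < v) :
    ∃ j, finFunctionFinEquiv.symm u j < finFunctionFinEquiv.symm v j := by
  by_contra! h
  have hval (w : Fin (n ^ q)) :
      (w : ℕ) = ∑ j, (finFunctionFinEquiv.symm w j : ℕ) * n ^ (j : ℕ) := by
    conv_lhs => rw [← finFunctionFinEquiv.apply_symm_apply w]
    exact finFunctionFinEquiv_apply _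
  have hvu : (v : ℕ) ≤ u := by
    rw [hval u, hval v]
    gcongr with j
    exact h j
  exact absurd huv (not_lt.mpr hvu)

theorem exists_not_hasMonoPath2 {q : ℕ} (hq : 0 < q) (n : ℕ) :
    ∃ c : Fin (n ^ q) → Fin (n ^ q) → Fin q, ¬ HasMonoPath2 n c := by
  have hcol (u v : Fin (n ^ q)) : ∃ j : Fin q,
      u < v → finFunctionFinEquiv.symm u j < finFunctionFinEquiv.symm v j := by
    by_cases huv : u < v
    · obtain ⟨j, hj⟩ := exists_digit_lt huv
      exact ⟨j, fun _ => hj⟩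
    · exact ⟨⟨0, hq⟩, fun h => absurd h huv⟩
  choose c hc using hcol
  exact ⟨c, (not_hasMonoPath2_iff c).mpr
    ⟨fun j v => finFunctionFinEquiv.symm v j, fun u v => hc u v⟩⟩

theorem stmt14_general (q n : ℕ) (hq : 2 ≤ q) :
    (∀ c : Fin (n ^ q + 1) → Fin (n ^ q + 1) → Fin q, HasMonoPath2 n c) ∧
    (∃ c : Fin (n ^ q) → Fin (n ^ q) → Fin q, ¬ HasMonoPath2 n c) :=
  ⟨fun _ => by_contra fun h => absurd (card_le_pow_of_not_hasMonoPath2 h) (by omega),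
    exists_not_hasMonoPath2 (by omega) n⟩

/-- For `q ≥ 2`, `n ≥ 2`: every `q`-coloring of the pairs of `{1,…,n^q+1}` contains a
monochromatic monotone path with `n` edges (so `N_2(q,n) ≤ n^q + 1`), and this is
tight: some `q`-coloring of the pairs of `{1,…,n^q}` has no such path. -/
theorem stmt14 (q n : ℕ) (hq : 2 ≤ q) (hn : 2 ≤ n) :
    (∀ c : Fin (n ^ q + 1) → Fin (n ^ q + 1) → Fin q, HasMonoPath2 n c) ∧
    (∃ c : Fin (n ^ q) → Fin (n ^ q) → Fin q, ¬ HasMonoPath2 n c) :=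
  stmt14_general q n hq
end

section
/- For every k ≥ 4, q ≥ 2, and n ≥ 2, N_k(q,n) ≤ N_{k-2}(N_3(q,n) − 1, 2), where N_k(q,n) is the smallest N such that every q-coloring of the k-subsets of {1,...,N} contains a monochromatic monotone path of length n. -/
/-!
Let `D` be the number of down-sets of the grid `[n]^q`.

Upper bound. Given a `q`-colouring `c` of the `k`-sets with no monochromatic path of length `n`,
record for each `(k-1)`-tuple `w` and colour `i` the length `ℓ_i(w) < n` of the longest path of
colour `i` ending at `w`. Colour each `(k-2)`-tuple `e` by the down-set of `[n]^q` generated by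
the vectors `ℓ(u, e)`, `u < e`. A monotone path `x_0 < ⋯ < x_{k-2}` of length two in this
`D`-colouring gives a `u < x_0` with `ℓ(u, x_0, …, x_{k-3}) ≥ ℓ(x_0, …, x_{k-2})`, while the edge
`(u, x_0, …, x_{k-2})` extends a longest path of its own colour ending at `(u, x_0, …, x_{k-3})`.

Lower bound. Enumerate the down-sets `A_1, …, A_D` along a linear extension of inclusion and
pick `p(a, b) ∈ A_b \ A_a` for `a < b`. For `a < b < c` some coordinate of `p(b, c)` exceeds that
of `p(a, b)`, since `A_b` is a down-set; colouring the triple by that coordinate, a monochromatic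
path of length `n` would give `n + 1` strictly increasing values in `[n]`. Hence `D < N_3(q, n)`.
-/

/-- Monochromatic monotone path of length `n` in a `q`-coloring of the `k`-subsets of
`{0,…,N-1}`: vertices `x_0 < ⋯ < x_{n+k-2}` such that all `n` consecutive `k`-tuples
receive the same color. -/
def HasMonoPathK (k : ℕ) {N q : ℕ} (n : ℕ) (c : (Fin k → Fin N) → Fin q) : Prop :=
  ∃ x : Fin (n + k - 1) → Fin N, StrictMono x ∧ ∃ col : Fin q,
    ∀ i : ℕ, ∀ _ : i < n,
      c (fun j => x ⟨i + j.1, by have := j.2; omega⟩) = col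

/-- `N_k(q,n)`: the least `N` such that every `q`-coloring of the `k`-subsets of
`{1,…,N}` contains a monochromatic monotone path of length `n`. -/
noncomputable def Nk (k q n : ℕ) : ℕ :=
  sInf {N : ℕ | ∀ c : (Fin k → Fin N) → Fin q, HasMonoPathK k n c}

theorem Fin.init_cons {n : ℕ} {α : Type*} (a : α) (f : Fin (n + 1) → α) :
    Fin.init (Fin.cons a f : Fin (n + 2) → α) = Fin.cons a (Fin.init f) := by
  funext j
  cases j using Fin.cases <;> simp [Fin.init]

theorem Fin.strictMono_cons_of_init {n : ℕ} {α : Type*} [Preorder α] {u : α}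
    {z : Fin (n + 2) → α} (hu : StrictMono (Fin.cons u (Fin.init z))) (hz : StrictMono z) :
    StrictMono (Fin.cons u z : Fin (n + 3) → α) :=
  Fin.strictMono_cons.2
    ⟨fun j => ((Fin.strictMono_cons.1 hu).1 0).trans_le (hz.monotone (Fin.zero_le j)), hz⟩

section LengthTwo

variable {k N q : ℕ}

theorem hasMonoPathK_two_iff {c : (Fin k → Fin N) → Fin q} :
    HasMonoPathK k 2 c ↔
      ∃ z : Fin (k + 1) → Fin N, StrictMono z ∧ c (Fin.init z) = c (Fin.tail z) := by
  have hk : 2 + k - 1 = k + 1 := by omega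
  constructor
  · rintro ⟨x, hx, i, hi⟩
    refine ⟨x ∘ Fin.cast hk.symm, hx.comp (Fin.cast_strictMono _), ?_⟩
    rw [← hi 1 one_lt_two] at hi
    convert hi 0 two_pos using 2 <;> funext j <;> exact congrArg x (Fin.ext (by simp [add_comm]))
  · rintro ⟨z, hz, hc⟩
    refine ⟨z ∘ Fin.cast hk, hz.comp (Fin.cast_strictMono _), c (Fin.init z), fun i hi => ?_⟩
    interval_cases i
    · congr 1; funext j; exact congrArg z (Fin.ext (by simp))
    · rw [hc]; congr 1; funext j; exact congrArg z (Fin.ext (by simp [add_comm]))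

theorem exists_strictMono_init_tail_eq {T : ℕ} {α : Type*} [Finite α] (hT : Nat.card α ≤ T)
    (hN : ∀ ψ : (Fin k → Fin N) → Fin T, HasMonoPathK k 2 ψ) (φ : (Fin k → Fin N) → α) :
    ∃ z : Fin (k + 1) → Fin N, StrictMono z ∧ φ (Fin.init z) = φ (Fin.tail z) := by
  let f : α ↪ Fin T := (Finite.equivFin α).toEmbedding.trans (Fin.castLEEmb hT)
  obtain ⟨z, hz, h⟩ := hasMonoPathK_two_iff.1 (hN (f ∘ φ))
  exact ⟨z, hz, f.injective h⟩

end LengthTwo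

theorem hasMonoPathK_of_le {k n q N M : ℕ} (h : N ≤ M)
    (hN : ∀ c : (Fin k → Fin N) → Fin q, HasMonoPathK k n c) (c : (Fin k → Fin M) → Fin q) :
    HasMonoPathK k n c := by
  obtain ⟨x, hx, i, hi⟩ := hN fun f => c (Fin.castLE h ∘ f)
  exact ⟨Fin.castLE h ∘ x, (Fin.strictMono_castLE h).comp hx, i, hi⟩

theorem hasMonoPathK_one_two {T : ℕ} (c : (Fin 1 → Fin (T + 1)) → Fin T) :
    HasMonoPathK 1 2 c := by
  obtain ⟨a, b, hab, hc⟩ :=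
    Fintype.exists_ne_map_eq_of_card_lt (fun v => c fun _ => v) (by simp)
  wlog hlt : a < b generalizing a b
  · exact this b a hab.symm hc.symm (lt_of_le_of_ne (not_lt.1 hlt) hab.symm)
  refine hasMonoPathK_two_iff.2 ⟨![a, b], by simpa using hlt, ?_⟩
  convert hc using 2 <;> funext j <;> fin_cases j <;> rfl

/-- Colour a `(k+1)`-tuple `e` by the set of colours of the edges `(u, e)`, `u < e`. -/
theorem hasMonoPathK_two_succ_of_forall {k N T : ℕ}
    (hN : ∀ ψ : (Fin (k + 1) → Fin N) → Fin (2 ^ T), HasMonoPathK (k + 1) 2 ψ)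
    (c : (Fin (k + 2) → Fin N) → Fin T) : HasMonoPathK (k + 2) 2 c := by
  let S : (Fin (k + 1) → Fin N) → Set (Fin T) :=
    fun e => {i | ∃ u, StrictMono (Fin.cons u e) ∧ c (Fin.cons u e) = i}
  obtain ⟨z, hz, hS⟩ := exists_strictMono_init_tail_eq (by simp) hN S
  have hzS : c z ∈ S (Fin.tail z) := ⟨z 0, by rwa [Fin.cons_self_tail], by rw [Fin.cons_self_tail]⟩
  obtain ⟨u, hu, hcu⟩ : c z ∈ S (Fin.init z) := hS ▸ hzS
  refine hasMonoPathK_two_iff.2 ⟨Fin.cons u z, Fin.strictMono_cons_of_init hu hz, ?_⟩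
  rw [Fin.init_cons, Fin.tail_cons, hcu]

theorem exists_forall_hasMonoPathK_two (k T : ℕ) :
    ∃ N, ∀ c : (Fin (k + 1) → Fin N) → Fin T, HasMonoPathK (k + 1) 2 c := by
  induction k generalizing T with
  | zero => exact ⟨T + 1, hasMonoPathK_one_two⟩
  | succ k ih =>
    obtain ⟨N, hN⟩ := ih (2 ^ T)
    exact ⟨N, hasMonoPathK_two_succ_of_forall hN⟩

section PathsEndingAt

variable {k N q n : ℕ} {c : (Fin (k + 2) → Fin N) → Fin q} {i : Fin q} {L : ℕ}
  {w : Fin (k + 1) → Fin N}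

variable (c i) in
def HasMonoPathTo (L : ℕ) (w : Fin (k + 1) → Fin N) : Prop :=
  ∃ x : ℕ → Fin N, StrictMonoOn x (Set.Iio (L + k + 1)) ∧ (∀ r : Fin (k + 1), x (L + r) = w r) ∧
    ∀ j < L, c (fun s => x (j + s)) = i

variable (c i) in
theorem hasMonoPathTo_zero (hw : StrictMono w) : HasMonoPathTo c i 0 w := by
  refine ⟨fun t => w ⟨min t k, by omega⟩, fun a ha b hb hab => hw ?_, fun r => ?_, by simp⟩
  · simp only [Set.mem_Iio] at ha hb
    simp only [Fin.mk_lt_mk]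
    omega
  · exact congrArg w (Fin.ext (by simp; omega))

theorem HasMonoPathTo.extend {e : Fin (k + 2) → Fin N} (h : HasMonoPathTo c i L (Fin.init e))
    (he : StrictMono e) (hc : c e = i) : HasMonoPathTo c i (L + 1) (Fin.tail e) := by
  obtain ⟨x, hx, hend, hedge⟩ := h
  set x' := Function.update x (L + k + 1) (e (Fin.last _))
  have hx' : ∀ t < L + k + 1, x' t = x t := fun t ht => Function.update_of_ne (by omega) _ _
  have hlast : x' (L + k + 1) = e (Fin.last _) := Function.update_self _ _ _
  have hinit (r : Fin (k + 1)) : x' (L + r) = e r.castSucc := (hx' _ (by omega)).trans (hend r)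
  refine ⟨x', fun a ha b hb hab => ?_, fun r => ?_, fun j hj => ?_⟩
  · simp only [Set.mem_Iio] at ha hb
    rw [hx' a (by omega)]
    obtain hb' | rfl := Nat.lt_or_eq_of_le (Nat.le_of_lt_succ (by omega : b < L + k + 2))
    · rw [hx' b hb']
      exact hx (Set.mem_Iio.2 (by omega)) hb' hab
    · rw [hlast]
      calc x a ≤ x (L + k) :=
            hx.monotoneOn (Set.mem_Iio.2 (by omega)) (Set.mem_Iio.2 (by omega)) (by omega)
        _ = e (Fin.last k).castSucc := hend (Fin.last k)
        _ < e (Fin.last _) := he (Fin.castSucc_lt_last _)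
  · obtain ⟨r, rfl⟩ | rfl := Fin.eq_castSucc_or_eq_last r
    · rw [Fin.tail, Fin.succ_castSucc]
      convert hinit r.succ using 2
      simp [add_assoc, add_comm 1]
    · rw [Fin.tail, Fin.succ_last, ← hlast, Fin.val_last, add_right_comm]
  · obtain hj | rfl := Nat.lt_succ_iff_lt_or_eq.1 hj
    · rw [← hedge j hj]
      congr 1
      funext s
      exact hx' _ (by omega)
    · rw [← hc]
      congr 1
      funext s
      obtain ⟨s, rfl⟩ | rfl := Fin.eq_castSucc_or_eq_last s
      · exact hinit s
      · simpa [add_assoc] using hlast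

theorem HasMonoPathTo.lt (hc : ¬ HasMonoPathK (k + 2) n c) (h : HasMonoPathTo c i L w) :
    L < n := by
  by_contra hL
  obtain ⟨x, hx, -, hedge⟩ := h
  exact hc ⟨fun t => x t, fun a b hab => hx (by simp; omega) (by simp; omega) hab, i,
    fun j hj => hedge j (by omega)⟩

variable (c i w) in
noncomputable def longestMonoPathTo : ℕ :=
  sSup {L | HasMonoPathTo c i L w}

theorem hasMonoPathTo_longestMonoPathTo (hc : ¬ HasMonoPathK (k + 2) n c) (hw : StrictMono w) :
    HasMonoPathTo c i (longestMonoPathTo c i w) w :=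
  Nat.sSup_mem ⟨0, hasMonoPathTo_zero c i hw⟩
    ⟨n, fun _ (hL : HasMonoPathTo c i _ w) => (hL.lt hc).le⟩

theorem HasMonoPathTo.le_longestMonoPathTo (hc : ¬ HasMonoPathK (k + 2) n c)
    (h : HasMonoPathTo c i L w) : L ≤ longestMonoPathTo c i w :=
  le_csSup ⟨n, fun _ (hL : HasMonoPathTo c i _ w) => (hL.lt hc).le⟩ h

end PathsEndingAt

variable (n) in
def extensionProfiles {k N q : ℕ} (c : (Fin (k + 3) → Fin N) → Fin q) (e : Fin (k + 1) → Fin N) :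
    LowerSet (Fin q → Fin n) where
  carrier := {v | ∃ u, StrictMono (Fin.cons u e) ∧
    ∀ i, (v i : ℕ) ≤ longestMonoPathTo c i (Fin.cons u e)}
  lower' _ _ hle := fun ⟨u, hu, hv⟩ => ⟨u, hu, fun i => (Fin.le_def.1 (hle i)).trans (hv i)⟩

theorem hasMonoPathK_add_two_of_forall {k N q n T : ℕ}
    (hT : Nat.card (LowerSet (Fin q → Fin n)) ≤ T)
    (hN : ∀ ψ : (Fin (k + 1) → Fin N) → Fin T, HasMonoPathK (k + 1) 2 ψ)
    (c : (Fin (k + 3) → Fin N) → Fin q) : HasMonoPathK (k + 3) n c := by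
  by_contra hc
  obtain ⟨z, hz, hD⟩ := exists_strictMono_init_tail_eq hT hN (extensionProfiles n c)
  let profile : Fin q → Fin n := fun i =>
    ⟨longestMonoPathTo c i z, (hasMonoPathTo_longestMonoPathTo hc hz).lt hc⟩
  have hprofile : profile ∈ extensionProfiles n c (Fin.tail z) :=
    ⟨z 0, by rwa [Fin.cons_self_tail], fun i => by rw [Fin.cons_self_tail]⟩
  rw [← hD] at hprofile
  obtain ⟨u, hu, hle⟩ := hprofile
  have he := Fin.strictMono_cons_of_init hu hz
  set i := c (Fin.cons u z)
  have hpath : HasMonoPathTo c i (longestMonoPathTo c i (Fin.cons u (Fin.init z)))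
      (Fin.init (Fin.cons u z : Fin (k + 3) → Fin N)) := by
    rw [Fin.init_cons]
    exact hasMonoPathTo_longestMonoPathTo hc hu
  have hlonger := (hpath.extend he rfl).le_longestMonoPathTo hc
  rw [Fin.tail_cons] at hlonger
  exact absurd (hle i) (not_le.2 hlonger)

theorem exists_monotone_equiv_fin (α : Type*) [PartialOrder α] [Finite α] :
    ∃ e : α ≃ Fin (Nat.card α), Monotone e := by
  let := Fintype.ofFinite α
  let : Fintype (LinearExtension α) := ‹Fintype α›
  let o := monoEquivOfFin (LinearExtension α) (Nat.card_eq_fintype_card (α := α)).symm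
  exact ⟨(Equiv.refl α).trans o.symm.toEquiv,
    fun a b h => o.symm.monotone (toLinearExtension.monotone h)⟩

/-- A monochromatic path would give `n + 1` increasing labels `p (x j) (x (j + 1)) i` in `Fin n`. -/
theorem not_hasMonoPathK_three_of_lt {N q n : ℕ} {p : Fin N → Fin N → Fin q → Fin n}
    {col : Fin N → Fin N → Fin N → Fin q}
    (h : ∀ a b c, a < b → b < c → p a b (col a b c) < p b c (col a b c)) :
    ¬ HasMonoPathK 3 n (fun f => col (f 0) (f 1) (f 2)) := by
  rintro ⟨x, hx, i, hi⟩
  let y : ℕ → Fin N := fun j => x ⟨min j (n + 1), by omega⟩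
  have hy : ∀ j < n + 1, y j < y (j + 1) := fun j hj => hx (Fin.mk_lt_mk.2 (by omega))
  let g : Fin (n + 1) → Fin n := fun j => p (y j) (y (j + 1)) i
  have hg : StrictMono g := Fin.strictMono_iff_lt_succ.2 fun j => by
    have hcol : col (y j) (y (j + 1)) (y (j + 2)) = i := by
      convert hi j j.2 using 2 <;> exact congrArg x (Fin.ext (by simp <;> omega))
    simpa [g, hcol] using h _ _ _ (hy j (by omega)) (hy (j + 1) (by omega))
  simpa using Fintype.card_le_of_injective g hg.injective

theorem exists_coloring_not_hasMonoPathK_three (q n : ℕ) [NeZero q] [NeZero n] :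
    ∃ c : (Fin 3 → Fin (Nat.card (LowerSet (Fin q → Fin n)))) → Fin q, ¬ HasMonoPathK 3 n c := by
  obtain ⟨e, he⟩ := exists_monotone_equiv_fin (LowerSet (Fin q → Fin n))
  have hsep : ∀ a b, ∃ y, a < b → y ∈ e.symm b ∧ y ∉ e.symm a := fun a b => by
    by_cases hab : a < b
    · have hnle : ¬ e.symm b ≤ e.symm a := fun hle =>
        (he hle).not_gt (by simpa using hab)
      obtain ⟨y, hyb, hya⟩ := Set.not_subset.1 hnle
      exact ⟨y, fun _ => ⟨hyb, hya⟩⟩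
    · exact ⟨default, fun h => absurd h hab⟩
  choose p hp using hsep
  have hcoord : ∀ a b c, ∃ i, a < b → b < c → p a b i < p b c i := fun a b c => by
    by_cases habc : a < b ∧ b < c
    · have hnle : ¬ p b c ≤ p a b := fun hle =>
        (hp b c habc.2).2 ((e.symm b).lower hle (hp a b habc.1).1)
      simp only [Pi.le_def, not_forall, not_le] at hnle
      obtain ⟨i, hi⟩ := hnle
      exact ⟨i, fun _ _ => hi⟩
    · exact ⟨default, fun hab hbc => absurd ⟨hab, hbc⟩ habc⟩
  choose col hcol using hcoord
  exact ⟨_, not_hasMonoPathK_three_of_lt hcol⟩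

theorem card_lowerSet_lt_Nk_three (q n : ℕ) [NeZero q] [NeZero n] :
    Nat.card (LowerSet (Fin q → Fin n)) < Nk 3 q n := by
  by_contra! hle
  obtain ⟨c, hc⟩ := exists_coloring_not_hasMonoPathK_three q n
  have hNk : Nk 3 q n ∈ {N | ∀ c : (Fin 3 → Fin N) → Fin q, HasMonoPathK 3 n c} :=
    Nat.sInf_mem ⟨_, hasMonoPathK_add_two_of_forall (k := 0) le_rfl hasMonoPathK_one_two⟩
  exact hc (hasMonoPathK_of_le hle hNk c)

/-- For every `k ≥ 4`, `q ≥ 2`, `n ≥ 2`: `N_k(q,n) ≤ N_{k-2}(N_3(q,n) − 1, 2)`. -/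
theorem stmt15 (k q n : ℕ) (hk : 4 ≤ k) (hq : 2 ≤ q) (hn : 2 ≤ n) :
    Nk k q n ≤ Nk (k - 2) (Nk 3 q n - 1) 2 := by
  obtain ⟨m, rfl⟩ : ∃ m, k = m + 3 := ⟨k - 3, by omega⟩
  have : NeZero q := ⟨by omega⟩
  have : NeZero n := ⟨by omega⟩
  have hD := card_lowerSet_lt_Nk_three q n
  exact Nat.sInf_le fun c => hasMonoPathK_add_two_of_forall (by omega)
    (Nat.sInf_mem (exists_forall_hasMonoPathK_two m (Nk 3 q n - 1))) c
end

section
/- Define the tower function t_k(x) by t_1(x) = x and t_{k+1}(x) = 2^{t_k(x)}. For every k ≥ 2 and real numbers a, b with a ≥ b + 1 and a ≥ 3, one has t_k(a) − t_k(b) ≥ t_k(a − 2^{-(k-2)}). -/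
/-- The tower function: `tower 0 x = x` and `tower (k+1) x = 2^{tower k x}`,
so that the paper's `t_k(x)` is `tower (k-1) x` (a tower of height `k-1` with `x` on
top). -/
noncomputable def tower : ℕ → ℝ → ℝ
  | 0, x => x
  | k + 1, x => 2 ^ tower k x

/-! Induction on the height, with `ε_n = 2⁻ⁿ`. One level down write `X = t(a)`, `Y = t(b)`.
Above `2` a tower grows with slope at least `1`, so `t(a - ε) ≤ X - ε`; and the induction
hypothesis gives `X - Y ≥ t(a - 2ε) ≥ n + 4`, so `2 ^ Y ≤ 2 ^ (X - 3) ε`. Hence it suffices that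
`2 ^ (-ε) + ε / 8 ≤ 1`, which is Bernoulli's inequality `(1/2) ^ ε ≤ 1 - ε / 2`. -/

open Real

lemma tower_succ (k : ℕ) (x : ℝ) : tower (k + 1) x = 2 ^ tower k x := rfl

lemma one_add_mul_log_two_le_two_rpow (x : ℝ) : 1 + x * log 2 ≤ 2 ^ x := by
  rw [rpow_def_of_pos two_pos, mul_comm x]
  linarith [add_one_le_exp (log 2 * x)]

lemma two_rpow_add_le_two_rpow_add {t ε : ℝ} (ht : 2 ≤ t) (hε : 0 ≤ ε) :
    2 ^ t + ε ≤ (2 : ℝ) ^ (t + ε) := by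
  have h4 : (4 : ℝ) ≤ 2 ^ t := by
    simpa [show (2 : ℝ) ^ (2 : ℝ) = 4 by norm_num] using
      rpow_le_rpow_of_exponent_le one_le_two ht
  have hε' : ε ≤ 4 * (ε * log 2) := by nlinarith [log_two_gt_d9]
  have hinc : ε ≤ 2 ^ t * (2 ^ ε - 1) := by
    nlinarith [one_add_mul_log_two_le_two_rpow ε, mul_nonneg hε (log_nonneg one_le_two)]
  rw [rpow_add two_pos]
  linarith

lemma add_two_le_two_rpow {t : ℝ} (ht : 2 ≤ t) : t + 2 ≤ (2 : ℝ) ^ t := by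
  have := two_rpow_add_le_two_rpow_add le_rfl (sub_nonneg.2 ht)
  norm_num at this
  linarith

lemma add_two_mul_le_tower (k : ℕ) {x : ℝ} (hx : 2 ≤ x) : x + 2 * k ≤ tower k x := by
  induction k with
  | zero => simp [tower]
  | succ k ih =>
    have := add_two_le_two_rpow (show 2 ≤ tower k x by linarith)
    rw [tower_succ]
    push_cast
    linarith

lemma tower_add_le_tower_add (k : ℕ) {x ε : ℝ} (hx : 2 ≤ x) (hε : 0 ≤ ε) :
    tower k x + ε ≤ tower k (x + ε) := by
  induction k with
  | zero => exact le_rfl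
  | succ k ih =>
    have hk : 2 ≤ tower k x := by linarith [add_two_mul_le_tower k hx]
    calc tower (k + 1) x + ε ≤ (2 : ℝ) ^ (tower k x + ε) :=
          two_rpow_add_le_two_rpow_add hk hε
      _ ≤ tower (k + 1) (x + ε) := rpow_le_rpow_of_exponent_le one_le_two ih

lemma two_rpow_sub_add_le {x q : ℝ} (hq0 : 0 ≤ q) (hq1 : q ≤ 1) :
    (2 : ℝ) ^ (x - q) + 2 ^ (x - 3) * q ≤ 2 ^ x := by
  have hbern : (2 : ℝ) ^ (-q) ≤ 1 - q / 2 := by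
    have := rpow_one_add_le_one_add_mul_self (s := -1 / 2) (by norm_num) hq0 hq1
    rw [rpow_neg zero_le_two, ← inv_rpow zero_le_two]
    norm_num at this ⊢
    linarith
  have h8 : (2 : ℝ) ^ (x - 3) = 2 ^ x / 8 := by
    rw [rpow_sub two_pos]
    norm_num
  rw [sub_eq_add_neg x q, rpow_add two_pos, h8]
  nlinarith [rpow_pos_of_pos two_pos x]

lemma tower_one_sub_one_le (a b : ℝ) (hab : b + 1 ≤ a) :
    tower 1 (a - 1) ≤ tower 1 a - tower 1 b := by
  have hb : (2 : ℝ) ^ b ≤ 2 ^ (a - 1) :=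
    rpow_le_rpow_of_exponent_le one_le_two (by linarith)
  have ha : (2 : ℝ) ^ a = 2 * 2 ^ (a - 1) := by
    rw [rpow_sub two_pos, rpow_one]
    ring
  show (2 : ℝ) ^ (a - 1) ≤ 2 ^ a - 2 ^ b
  linarith

lemma tower_sub_inv_two_pow_le (n : ℕ) {a b : ℝ} (hab : b + 1 ≤ a) (ha : 3 ≤ a) :
    tower (n + 1) (a - (2 ^ n)⁻¹) ≤ tower (n + 1) a - tower (n + 1) b := by
  induction n with
  | zero => simpa using tower_one_sub_one_le a b hab
  | succ n ih =>
    set X := tower (n + 1) a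
    set q : ℝ := (2 ^ (n + 1))⁻¹
    have hq0 : 0 ≤ q := by positivity
    have hq1 : q ≤ 1 := inv_le_one_of_one_le₀ (one_le_pow₀ one_le_two)
    have hεn : (2 ^ n : ℝ)⁻¹ ≤ 1 := inv_le_one_of_one_le₀ (one_le_pow₀ one_le_two)
    have hgap : tower (n + 1) b ≤ X - (n + 4) := by
      have := add_two_mul_le_tower (n + 1) (show 2 ≤ a - (2 ^ n)⁻¹ by linarith)
      push_cast at this
      linarith
    have hshift : tower (n + 1) (a - q) ≤ X - q := by
      have := tower_add_le_tower_add (n + 1) (show 2 ≤ a - q by linarith) hq0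
      rw [sub_add_cancel] at this
      linarith
    have hsmall : (2 : ℝ) ^ tower (n + 1) b ≤ 2 ^ (X - 3) * q := by
      calc (2 : ℝ) ^ tower (n + 1) b ≤ 2 ^ (X - 3 - (n + 1 : ℕ)) :=
            rpow_le_rpow_of_exponent_le one_le_two (by push_cast; linarith)
        _ = 2 ^ (X - 3) * q := by rw [rpow_sub two_pos, rpow_natCast, div_eq_mul_inv]
    calc tower (n + 2) (a - q) ≤ (2 : ℝ) ^ (X - q) :=
          rpow_le_rpow_of_exponent_le one_le_two hshift
      _ ≤ 2 ^ X - 2 ^ (X - 3) * q := by linarith [two_rpow_sub_add_le (x := X) hq0 hq1]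
      _ ≤ 2 ^ X - 2 ^ tower (n + 1) b := by linarith

theorem stmt19_general (k : ℕ) (hk : 2 ≤ k) (a b : ℝ) (hab : b + 1 ≤ a)
    (ha : 3 ≤ a) :
    tower (k - 1) (a - (2 : ℝ) ^ (-((k : ℝ) - 2))) ≤ tower (k - 1) a - tower (k - 1) b := by
  obtain ⟨n, rfl⟩ : ∃ n, k = n + 2 := ⟨k - 2, by omega⟩
  have hε : (2 : ℝ) ^ (-((↑(n + 2) : ℝ) - 2)) = (2 ^ n)⁻¹ := by
    rw [rpow_neg zero_le_two]
    push_cast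
    rw [add_sub_cancel_right, rpow_natCast]
  rw [hε]
  exact tower_sub_inv_two_pow_le n hab ha

/-- For `k ≥ 2` and positive reals `a ≥ b + 1` with `a ≥ 3`,
`t_k(a) − t_k(b) ≥ t_k(a − 2^{-(k-2)})`. -/
theorem stmt19 (k : ℕ) (hk : 2 ≤ k) (a b : ℝ) (hb : 0 < b) (hab : b + 1 ≤ a)
    (ha : 3 ≤ a) :
    tower (k - 1) (a - (2 : ℝ) ^ (-((k : ℝ) - 2))) ≤ tower (k - 1) a - tower (k - 1) b :=
  stmt19_general k hk a b hab ha
end
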